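/- arXiv:2502.11692 — 15 statements merged into one kernel-verified Lean document; each statement's English description precedes it below -/
import Mathlib

section
/- Let a > 1 and c > 0 be real numbers and let φ(z) = log z + log a − c·z²/(1−z) for z ∈ (0,1). Then there exists z' ∈ (0,1) such that φ is strictly increasing on the interval (0, z'] and strictly decreasing on the interval [z', 1). -/
private lemma psi_hasDerivAt (c x : ℝ) :
    HasDerivAt (fun z : ℝ => (1 - z) ^ 2 - c * (z ^ 2 * (2 - z)))
      (2 * (1 - x) * (-1) - c * (2 * x * (2 - x) + x ^ 2 * (-1))) x := by
  have h1 : HasDerivAt (fun z : ℝ => (1 - z) ^ 2) (2 * (1 - x) * (-1)) x := by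
    have := ((hasDerivAt_id x).const_sub 1).fun_pow 2
    simpa [pow_one, mul_comm, mul_assoc, mul_left_comm] using this
  have h2 : HasDerivAt (fun z : ℝ => z ^ 2 * (2 - z)) (2 * x * (2 - x) + x ^ 2 * (-1)) x := by
    have hp : HasDerivAt (fun z : ℝ => z ^ 2) (2 * x) x := by
      simpa using hasDerivAt_pow 2 x
    have hq : HasDerivAt (fun z : ℝ => 2 - z) (-1) x := (hasDerivAt_id x).const_sub 2
    simpa [mul_comm, mul_assoc, mul_left_comm] using hp.fun_mul hq
  exact h1.sub (h2.const_mul c)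

private lemma phi_hasDerivAt (a c x : ℝ) (hx0 : 0 < x) (hx1 : x < 1) :
    HasDerivAt (fun z : ℝ => Real.log z + Real.log a - c * z ^ 2 / (1 - z))
      (((1 - x) ^ 2 - c * (x ^ 2 * (2 - x))) / (x * (1 - x) ^ 2)) x := by
  have hxne : x ≠ 0 := ne_of_gt hx0
  have h1x : (1 : ℝ) - x ≠ 0 := sub_ne_zero.mpr (ne_of_gt hx1)
  have hlog : HasDerivAt (fun z : ℝ => Real.log z + Real.log a) x⁻¹ x :=
    (Real.hasDerivAt_log hxne).add_const _
  have hnum : HasDerivAt (fun z : ℝ => c * z ^ 2) (c * (2 * x)) x := by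
    simpa [mul_comm, mul_assoc] using (hasDerivAt_pow 2 x).const_mul c
  have hden : HasDerivAt (fun z : ℝ => 1 - z) (-1) x := (hasDerivAt_id x).const_sub 1
  have hdiv := hnum.fun_div hden h1x
  have h := hlog.fun_sub hdiv
  refine h.congr_deriv ?_
  field_simp
  ring

/-- Anabolic phase function: `φ_{a,c}(z) = log z + log a − c·z²/(1−z)` has a unique
mode `z'` in `(0,1)`: it is strictly increasing on `(0, z']` and strictly
decreasing on `[z', 1)`. -/
theorem stmt_0 (a c : ℝ) (ha : 1 < a) (hc : 0 < c) :
    ∃ z' ∈ Set.Ioo (0 : ℝ) 1,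
      StrictMonoOn (fun z : ℝ => Real.log z + Real.log a - c * z ^ 2 / (1 - z))
        (Set.Ioc 0 z') ∧
      StrictAntiOn (fun z : ℝ => Real.log z + Real.log a - c * z ^ 2 / (1 - z))
        (Set.Ico z' 1) := by
  set ψ : ℝ → ℝ := fun z => (1 - z) ^ 2 - c * (z ^ 2 * (2 - z)) with hψ
  have hψcont : Continuous ψ := by fun_prop
  -- ψ strictly decreasing on [0,1]
  have hψanti : StrictAntiOn ψ (Set.Icc 0 1) := by
    apply strictAntiOn_of_deriv_neg (convex_Icc 0 1) hψcont.continuousOn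
    intro x hx
    rw [interior_Icc] at hx
    rw [(psi_hasDerivAt c x).deriv]
    nlinarith [hx.1, hx.2, mul_pos hc hx.1]
  -- find the root z'
  have hψ0 : ψ 0 = 1 := by simp [hψ]
  have hψ1 : ψ 1 = -c := by norm_num [hψ]
  obtain ⟨z', hz'mem, hz'0⟩ : ∃ z' ∈ Set.Icc (0:ℝ) 1, ψ z' = 0 := by
    have := intermediate_value_Icc' (by norm_num : (0:ℝ) ≤ 1) hψcont.continuousOn
    have h0 : (0:ℝ) ∈ Set.Icc (ψ 1) (ψ 0) := by
      rw [hψ0, hψ1]; constructor <;> linarith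
    obtain ⟨z', hz', hz'0⟩ := this h0
    exact ⟨z', hz', hz'0⟩
  have hz'ne0 : z' ≠ 0 := by intro h; rw [h, hψ0] at hz'0; norm_num at hz'0
  have hz'ne1 : z' ≠ 1 := by intro h; rw [h, hψ1] at hz'0; linarith
  have hz'Ioo : z' ∈ Set.Ioo (0:ℝ) 1 :=
    ⟨lt_of_le_of_ne hz'mem.1 (Ne.symm hz'ne0), lt_of_le_of_ne hz'mem.2 hz'ne1⟩
  refine ⟨z', hz'Ioo, ?_, ?_⟩
  · -- strictly increasing on (0, z']
    apply strictMonoOn_of_deriv_pos (convex_Ioc 0 z')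
    · intro x hx
      have hx0 : 0 < x := hx.1
      have hx1 : x < 1 := lt_of_le_of_lt hx.2 hz'Ioo.2
      exact ((phi_hasDerivAt a c x hx0 hx1).continuousAt).continuousWithinAt
    · intro x hx
      rw [interior_Ioc] at hx
      have hx0 : 0 < x := hx.1
      have hx1 : x < 1 := lt_trans hx.2 hz'Ioo.2
      rw [(phi_hasDerivAt a c x hx0 hx1).deriv]
      have hψx : 0 < ψ x := by
        have := hψanti (Set.mem_Icc.mpr ⟨le_of_lt hx0, le_of_lt hx1⟩)
          (Set.mem_Icc.mpr ⟨hz'mem.1, hz'mem.2⟩) hx.2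
        rw [hz'0] at this; linarith
      exact div_pos hψx (mul_pos hx0 (pow_pos (by linarith) 2))
  · -- strictly decreasing on [z', 1)
    apply strictAntiOn_of_deriv_neg (convex_Ico z' 1)
    · intro x hx
      have hx0 : 0 < x := lt_of_lt_of_le hz'Ioo.1 hx.1
      have hx1 : x < 1 := hx.2
      exact ((phi_hasDerivAt a c x hx0 hx1).continuousAt).continuousWithinAt
    · intro x hx
      rw [interior_Ico] at hx
      have hx0 : 0 < x := lt_trans hz'Ioo.1 hx.1
      have hx1 : x < 1 := hx.2
      rw [(phi_hasDerivAt a c x hx0 hx1).deriv]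
      have hψx : ψ x < 0 := by
        have := hψanti (Set.mem_Icc.mpr ⟨hz'mem.1, hz'mem.2⟩)
          (Set.mem_Icc.mpr ⟨le_of_lt hx0, le_of_lt hx1⟩) hx.1
        rw [hz'0] at this; linarith
      exact div_neg_of_neg_of_pos hψx (mul_pos hx0 (pow_pos (by linarith) 2))
end

section
/- Let a > 1 be a fixed real number. There exists c₀ > 0 such that for every c with 0 < c < c₀, the equation φ_{a,c}(z) = 0 has exactly two solutions z in the open interval (0,1). -/
lemma phase_deriv1 (a c z : ℝ) (hz : z ∈ Set.Ioo (0:ℝ) 1) :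
    HasDerivAt (fun z => Real.log z + Real.log a - c * z ^ 2 / (1 - z))
      (z⁻¹ - c * (2*z - z^2) / (1-z)^2) z := by
  have hz0 : z ≠ 0 := ne_of_gt hz.1
  have hz1 : (1:ℝ) - z ≠ 0 := by have := hz.2; intro h; linarith [hz.2]
  have h1 : HasDerivAt Real.log z⁻¹ z := Real.hasDerivAt_log hz0
  have h2 : HasDerivAt (fun z : ℝ => c * z ^ 2) (c * (2 * z)) z := by
    simpa using (hasDerivAt_pow 2 z).const_mul c
  have h3 : HasDerivAt (fun z : ℝ => 1 - z) (-1) z := by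
    simpa using (hasDerivAt_id z).const_sub 1
  have h4 := h2.div h3 hz1
  have h5 := (h1.add_const (Real.log a)).sub h4
  exact h5.congr_deriv (by ring)

lemma phase_deriv2 (c z : ℝ) (hz : z ∈ Set.Ioo (0:ℝ) 1) :
    HasDerivAt (fun z => z⁻¹ - c * (2*z - z^2) / (1-z)^2)
      (-(1/z^2) - 2*c/(1-z)^3) z := by
  have hz0 : z ≠ 0 := ne_of_gt hz.1
  have hz1 : (1:ℝ) - z ≠ 0 := by intro h; linarith [hz.2]
  have h1 : HasDerivAt (fun z : ℝ => z⁻¹) (-(z^2)⁻¹) z := hasDerivAt_inv hz0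
  have h3 : HasDerivAt (fun z : ℝ => 1 - z) (-1) z := by
    simpa using (hasDerivAt_id z).const_sub 1
  have hu : HasDerivAt (fun z : ℝ => c * (2*z - z^2)) (c * (2 - 2*z)) z := by
    have : HasDerivAt (fun z : ℝ => 2*z - z^2) (2 - 2*z) z := by
      exact (((hasDerivAt_id z).const_mul 2).sub (hasDerivAt_pow 2 z)).congr_deriv (by ring)
    simpa using this.const_mul c
  have hv : HasDerivAt (fun z : ℝ => (1-z)^2) (2*(1-z)^1*(-1)) z := by
    exact (h3.pow 2).congr_deriv (by ring)
  have hv0 : ((1:ℝ)-z)^2 ≠ 0 := pow_ne_zero _ hz1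
  have h4 := hu.div hv hv0
  have h5 := h1.sub h4
  exact h5.congr_deriv (by field_simp; ring)

lemma phase_concave (a c : ℝ) (hc : 0 < c)
    (hd1 : ∀ z ∈ Set.Ioo (0:ℝ) 1,
      HasDerivAt (fun z => Real.log z + Real.log a - c * z ^ 2 / (1 - z))
        (z⁻¹ - c * (2*z - z^2) / (1-z)^2) z)
    (hd2 : ∀ z ∈ Set.Ioo (0:ℝ) 1,
      HasDerivAt (fun z => z⁻¹ - c * (2*z - z^2) / (1-z)^2)
        (-(1/z^2) - 2*c/(1-z)^3) z) :
    StrictConcaveOn ℝ (Set.Ioo (0:ℝ) 1)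
      (fun z => Real.log z + Real.log a - c * z ^ 2 / (1 - z)) := by
  set f : ℝ → ℝ := fun z => Real.log z + Real.log a - c * z ^ 2 / (1 - z) with hf
  apply strictConcaveOn_of_deriv2_neg (convex_Ioo 0 1)
  · exact fun z hz => (hd1 z hz).continuousAt.continuousWithinAt
  · intro x hx
    rw [interior_Ioo] at hx
    show deriv (deriv f) x < 0
    have heq : deriv f =ᶠ[nhds x] fun z => z⁻¹ - c * (2*z - z^2) / (1-z)^2 := by
      filter_upwards [Ioo_mem_nhds hx.1 hx.2] with y hy using (hd1 y hy).deriv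
    rw [heq.deriv_eq, (hd2 x hx).deriv]
    have h1 : 0 < 1/x^2 := one_div_pos.2 (pow_pos hx.1 2)
    have h2 : 0 < 2*c/(1-x)^3 := by
      have : (0:ℝ) < 1 - x := by linarith [hx.2]
      positivity
    linarith

lemma concave_middle_pos {s : Set ℝ} {f : ℝ → ℝ} (h : StrictConcaveOn ℝ s f)
    {u v w : ℝ} (hu : u ∈ s) (hw : w ∈ s) (h1 : u < v) (h2 : v < w)
    (hfu : f u = 0) (hfw : f w = 0) : 0 < f v := by
  have hwu : 0 < w - u := by linarith
  set t : ℝ := (w - v)/(w - u) with htdef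
  have ht0 : 0 < t := div_pos (by linarith) hwu
  have ht1 : t < 1 := (div_lt_one hwu).2 (by linarith)
  have key := h.2 hu hw (ne_of_lt (h1.trans h2)) ht0 (by linarith : 0 < 1 - t) (by ring)
  have hv : t * u + (1-t) * w = v := by
    rw [htdef]
    field_simp
    ring
  simp only [smul_eq_mul, hfu, hfw, hv] at key
  linarith
open Set Real

/-- For fixed `a > 1`, for all sufficiently small `c > 0` the anabolic phase function
`φ_{a,c}(z) = log z + log a − c·z²/(1−z)` has exactly two zeros in `(0,1)`. -/
theorem stmt_1 (a : ℝ) (ha : 1 < a) :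
    ∃ c₀ > (0 : ℝ), ∀ c : ℝ, 0 < c → c < c₀ →
      {z ∈ Set.Ioo (0 : ℝ) 1 |
        Real.log z + Real.log a - c * z ^ 2 / (1 - z) = 0}.encard = 2 := by
  have ha0 : (0:ℝ) < a := by linarith
  have hia : a⁻¹ < 1 := by rw [inv_lt_one_iff₀]; right; exact ha
  have hia0 : 0 < a⁻¹ := inv_pos.2 ha0
  obtain ⟨z₀, hz₀def⟩ : ∃ z₀ : ℝ, z₀ = (a⁻¹ + 1)/2 := ⟨_, rfl⟩
  have hz₀0 : 0 < z₀ := by rw [hz₀def]; positivity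
  have hz₀1 : z₀ < 1 := by rw [hz₀def]; linarith
  have hz₀h : 1/2 < z₀ := by rw [hz₀def]; linarith
  have haz₀ : a * z₀ = (1 + a)/2 := by
    rw [hz₀def]; field_simp
  have hL : 0 < Real.log a + Real.log z₀ := by
    have h1 : Real.log a + Real.log z₀ = Real.log (a * z₀) :=
      (Real.log_mul (ne_of_gt ha0) (ne_of_gt hz₀0)).symm
    rw [h1, haz₀]
    exact Real.log_pos (by linarith)
  refine ⟨(Real.log a + Real.log z₀) * (1 - z₀) / z₀ ^ 2, div_pos (mul_pos hL (by linarith)) (pow_pos hz₀0 2), ?_⟩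
  intro c hc hcc₀
  set f : ℝ → ℝ := fun z => Real.log z + Real.log a - c * z ^ 2 / (1 - z) with hfdef
  -- basic facts
  have hconc : StrictConcaveOn ℝ (Set.Ioo (0:ℝ) 1) f :=
    phase_concave a c hc (fun z hz => phase_deriv1 a c z hz) (fun z hz => phase_deriv2 c z hz)
  have hcont : ContinuousOn f (Set.Ioo (0:ℝ) 1) :=
    fun z hz => (phase_deriv1 a c z hz).continuousAt.continuousWithinAt
  -- value at z₀ is positive
  have hfz₀ : 0 < f z₀ := by
    have h1 : c * z₀ ^ 2 / (1 - z₀) < Real.log a + Real.log z₀ := by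
      rw [div_lt_iff₀ (by linarith : (0:ℝ) < 1 - z₀)]
      calc c * z₀ ^ 2 < (Real.log a + Real.log z₀) * (1 - z₀) / z₀ ^ 2 * z₀ ^ 2 := by
            have := mul_lt_mul_of_pos_right hcc₀ (pow_pos hz₀0 2)
            linarith
        _ = (Real.log a + Real.log z₀) * (1 - z₀) := by field_simp
    simp only [hfdef]
    linarith
  -- negative point on the left
  obtain ⟨z₁, hz₁def⟩ : ∃ z₁ : ℝ, z₁ = a⁻¹/2 := ⟨_, rfl⟩
  have hz₁0 : 0 < z₁ := by rw [hz₁def]; positivity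
  have hz₁z₀ : z₁ < z₀ := by rw [hz₁def, hz₀def]; linarith
  have hz₁1 : z₁ < 1 := by linarith
  have hfz₁ : f z₁ < 0 := by
    have h1 : Real.log z₁ + Real.log a = Real.log (a * z₁) := by
      rw [Real.log_mul (ne_of_gt ha0) (ne_of_gt hz₁0)]; ring
    have h2 : a * z₁ = 1/2 := by rw [hz₁def]; field_simp
    have h3 : Real.log (a * z₁) < 0 := by
      rw [h2]; exact Real.log_neg (by norm_num) (by norm_num)
    have h4 : 0 < c * z₁ ^ 2 / (1 - z₁) := by
      have : (0:ℝ) < 1 - z₁ := by linarith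
      positivity
    simp only [hfdef]
    linarith [h1 ▸ h3]
  -- negative point on the right
  have hla : 0 < Real.log a := Real.log_pos ha
  obtain ⟨r, hrdef⟩ : ∃ r : ℝ, r = min ((1 - z₀)/2) (c / (4*(Real.log a + 1))) := ⟨_, rfl⟩
  have hr0 : 0 < r := hrdef ▸ lt_min (by linarith) (div_pos hc (by linarith))
  have hrle : r ≤ (1 - z₀)/2 := hrdef ▸ min_le_left _ _
  obtain ⟨z₂, hz₂def⟩ : ∃ z₂ : ℝ, z₂ = 1 - r := ⟨_, rfl⟩
  have hz₀z₂ : z₀ < z₂ := by rw [hz₂def]; linarith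
  have hz₂1 : z₂ < 1 := by rw [hz₂def]; linarith
  have hz₂h : 1/2 < z₂ := by linarith
  have hfz₂ : f z₂ < 0 := by
    have h4r : r * (4*(Real.log a + 1)) ≤ c := by
      have h : r ≤ c / (4*(Real.log a + 1)) := hrdef ▸ min_le_right _ _
      rw [le_div_iff₀ (by linarith : (0:ℝ) < 4*(Real.log a + 1))] at h
      exact h
    have h1z₂ : 1 - z₂ = r := by rw [hz₂def]; ring
    have hkey : Real.log a + 1 ≤ c * z₂ ^ 2 / (1 - z₂) := by
      rw [h1z₂, le_div_iff₀ hr0]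
      have hz₂sq : 1/4 < z₂^2 := by nlinarith
      have h5 : r * (4*(Real.log a + 1)) * z₂^2 ≤ c * z₂^2 :=
        mul_le_mul_of_nonneg_right h4r (sq_nonneg z₂)
      have hP : 0 < (Real.log a + 1) * r * (4*z₂^2 - 1) :=
        mul_pos (mul_pos (by linarith) hr0) (by linarith [hz₂sq])
      nlinarith [h5, hP]
    have hlz₂ : Real.log z₂ < 0 := Real.log_neg (by linarith) hz₂1
    simp only [hfdef]
    linarith
  -- IVT to get the two zeros
  have hsub1 : Set.Icc z₁ z₀ ⊆ Set.Ioo (0:ℝ) 1 := fun w hw => ⟨by linarith [hw.1], by linarith [hw.2]⟩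
  have hsub2 : Set.Icc z₀ z₂ ⊆ Set.Ioo (0:ℝ) 1 := fun w hw => ⟨by linarith [hw.1], by linarith [hw.2]⟩
  obtain ⟨x, hxmem, hfx⟩ : ∃ x ∈ Set.Ioo z₁ z₀, f x = 0 := by
    have := intermediate_value_Ioo (le_of_lt hz₁z₀) (hcont.mono hsub1)
    obtain ⟨x, hx1, hx2⟩ := this ⟨hfz₁, hfz₀⟩
    exact ⟨x, hx1, hx2⟩
  obtain ⟨y, hymem, hfy⟩ : ∃ y ∈ Set.Ioo z₀ z₂, f y = 0 := by
    have := intermediate_value_Ioo' (le_of_lt hz₀z₂) (hcont.mono hsub2)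
    obtain ⟨y, hy1, hy2⟩ := this ⟨hfz₂, hfz₀⟩
    exact ⟨y, hy1, hy2⟩
  have hxI : x ∈ Set.Ioo (0:ℝ) 1 := ⟨by linarith [hxmem.1], by linarith [hxmem.2]⟩
  have hyI : y ∈ Set.Ioo (0:ℝ) 1 := ⟨by linarith [hymem.1], by linarith [hymem.2]⟩
  have hxy : x < y := by linarith [hxmem.2, hymem.1]
  have hset : {z ∈ Set.Ioo (0:ℝ) 1 | f z = 0} = {x, y} := by
    ext w
    constructor
    · rintro ⟨hwI, hfw⟩
      rcases lt_trichotomy w x with h | h | h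
      · exact absurd hfx (ne_of_gt (concave_middle_pos hconc hwI hyI h hxy hfw hfy))
      · exact Or.inl h
      · rcases lt_trichotomy w y with h' | h' | h'
        · exact absurd hfw (ne_of_gt (concave_middle_pos hconc hxI hyI h h' hfx hfy))
        · exact Or.inr h'
        · exact absurd hfy (ne_of_gt (concave_middle_pos hconc hxI hwI hxy h' hfx hfw))
    · rintro (rfl | rfl)
      · exact ⟨hxI, hfx⟩
      · exact ⟨hyI, hfy⟩
  calc {z ∈ Set.Ioo (0:ℝ) 1 | Real.log z + Real.log a - c * z ^ 2 / (1 - z) = 0}.encard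
      = ({x, y} : Set ℝ).encard := by rw [← hset]
    _ = 2 := Set.encard_pair (ne_of_lt hxy)
end

section
/- Let a > 1 be a fixed real number, and for each c > 0 let z'(c) ∈ (0,1) be the unique point such that φ_{a,c} is strictly increasing on (0, z'(c)] and strictly decreasing on [z'(c), 1). Then (1 − z'(c))/√c tends to 1 as c tends to 0 from above, i.e. 1 − z'(c) ∼ √c as c → 0⁺. -/
/-- If `f` has derivative `D` at `x` and is strictly antitone on `[x, b)` with `x < b`,
then `D ≤ 0`. -/
lemma aux_deriv_nonpos_of_strictAntiOn {f : ℝ → ℝ} {x b D : ℝ} (hd : HasDerivAt f D x)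
    (hxb : x < b) (hf : StrictAntiOn f (Set.Ico x b)) : D ≤ 0 := by
  have ht : Filter.Tendsto (slope f x) (nhdsWithin x {x}ᶜ) (nhds D) :=
    hasDerivAt_iff_tendsto_slope.mp hd
  have h2 : Filter.Tendsto (slope f x) (nhdsWithin x (Set.Ioi x)) (nhds D) :=
    ht.mono_left (nhdsWithin_mono x (fun y hy => (ne_of_gt hy : y ≠ x)))
  refine le_of_tendsto h2 ?_
  filter_upwards [Ioo_mem_nhdsGT_of_mem ⟨le_refl x, hxb⟩] with y hy
  rw [slope_def_field]
  have h1 : f y < f x := hf ⟨le_refl x, hxb⟩ ⟨hy.1.le, hy.2⟩ hy.1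
  have h3 : 0 < y - x := by linarith [hy.1]
  exact le_of_lt (div_neg_of_neg_of_pos (by linarith) h3)

/-- If `f` has derivative `D` at `x` and is strictly monotone on `(a, x]` with `a < x`,
then `0 ≤ D`. -/
lemma aux_deriv_nonneg_of_strictMonoOn {f : ℝ → ℝ} {x a D : ℝ} (hd : HasDerivAt f D x)
    (hax : a < x) (hf : StrictMonoOn f (Set.Ioc a x)) : 0 ≤ D := by
  have ht : Filter.Tendsto (slope f x) (nhdsWithin x {x}ᶜ) (nhds D) :=
    hasDerivAt_iff_tendsto_slope.mp hd
  have h2 : Filter.Tendsto (slope f x) (nhdsWithin x (Set.Iio x)) (nhds D) :=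
    ht.mono_left (nhdsWithin_mono x (fun y hy => (ne_of_lt hy : y ≠ x)))
  refine ge_of_tendsto h2 ?_
  filter_upwards [Ioo_mem_nhdsLT_of_mem ⟨hax, le_refl x⟩] with y hy
  rw [slope_def_field]
  have h1 : f y < f x := hf ⟨hy.1, hy.2.le⟩ ⟨hax, le_refl x⟩ hy.2
  have h3 : y - x < 0 := by linarith [hy.2]
  exact le_of_lt (div_pos_of_neg_of_neg (by linarith) h3)

/-- Derivative of the anabolic phase function. -/
lemma aux_phase_hasDerivAt (a c x : ℝ) (hx0 : 0 < x) (hx1 : x < 1) :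
    HasDerivAt (fun z : ℝ => Real.log z + Real.log a - c * z ^ 2 / (1 - z))
      (((1 - x) ^ 2 - c * x ^ 2 * (2 - x)) / (x * (1 - x) ^ 2)) x := by
  have hxne : x ≠ 0 := ne_of_gt hx0
  have h1ne : (1 : ℝ) - x ≠ 0 := by intro h; nlinarith
  have hlog : HasDerivAt (fun z : ℝ => Real.log z + Real.log a) x⁻¹ x := by
    simpa using (Real.hasDerivAt_log hxne).add_const (Real.log a)
  have hnum : HasDerivAt (fun z : ℝ => c * z ^ 2) (c * (2 * x)) x := by
    simpa using ((hasDerivAt_pow 2 x).const_mul c)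
  have hden : HasDerivAt (fun z : ℝ => 1 - z) (-1) x := by
    simpa using (hasDerivAt_id x).const_sub 1
  have hdiv := hnum.div hden h1ne
  have h := hlog.sub hdiv
  refine h.congr_deriv ?_
  field_simp
  ring

set_option maxHeartbeats 800000 in
/-- For fixed `a > 1`, if `z'(c)` denotes the unique mode of the anabolic phase function
`φ_{a,c}(z) = log z + log a − c·z²/(1−z)` (strictly increasing before `z'(c)`, strictly
decreasing after), then `1 − z'(c) ∼ √c` as `c → 0⁺`. -/
theorem stmt_3 (a : ℝ) (ha : 1 < a) (z' : ℝ → ℝ)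
    (h : ∀ c : ℝ, 0 < c →
      z' c ∈ Set.Ioo (0 : ℝ) 1 ∧
      StrictMonoOn (fun z : ℝ => Real.log z + Real.log a - c * z ^ 2 / (1 - z))
        (Set.Ioc 0 (z' c)) ∧
      StrictAntiOn (fun z : ℝ => Real.log z + Real.log a - c * z ^ 2 / (1 - z))
        (Set.Ico (z' c) 1)) :
    Filter.Tendsto (fun c : ℝ => (1 - z' c) / Real.sqrt c)
      (nhdsWithin 0 (Set.Ioi 0)) (nhds 1) := by
  rw [Metric.tendsto_nhds]
  intro ε hε
  set δ : ℝ := min (ε / 2) (1 / 2) with hδdef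
  have hδpos : 0 < δ := lt_min (by linarith) (by norm_num)
  have hδhalf : δ ≤ 1 / 2 := min_le_right _ _
  have hδε : δ < ε := lt_of_le_of_lt (min_le_left _ _) (by linarith)
  have hc₀pos : 0 < (δ / 2) ^ 2 := by positivity
  filter_upwards [Ioo_mem_nhdsGT_of_mem ⟨le_refl (0 : ℝ), hc₀pos⟩] with c hc
  obtain ⟨hcpos, hcsmall⟩ := hc
  obtain ⟨hz, hmono, hanti⟩ := h c hcpos
  set s : ℝ := Real.sqrt c with hsdef
  have hspos : 0 < s := Real.sqrt_pos.mpr hcpos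
  have hs2 : s ^ 2 = c := Real.sq_sqrt hcpos.le
  have hsδ : s < δ / 2 := by
    have := Real.sqrt_lt_sqrt hcpos.le hcsmall
    rwa [Real.sqrt_sq (by positivity)] at this
  -- Upper bound: x₁ := 1 - (1+δ)s ≤ z' c
  set x₁ : ℝ := 1 - (1 + δ) * s with hx₁def
  have hx₁0 : 0 < x₁ := by nlinarith
  have hx₁1 : x₁ < 1 := by nlinarith
  have hnum₁ : 0 < (1 - x₁) ^ 2 - c * x₁ ^ 2 * (2 - x₁) := by
    have h1x : 1 - x₁ = (1 + δ) * s := by ring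
    have hfac : 0 < (1 - x₁) * (1 + x₁ - x₁ ^ 2) := by
      apply mul_pos (by linarith)
      nlinarith
    have hg : x₁ ^ 2 * (2 - x₁) < 1 := by nlinarith
    nlinarith [mul_pos hspos hspos]
  have hup : x₁ ≤ z' c := by
    by_contra hcon
    push_neg at hcon
    have hD := aux_phase_hasDerivAt a c x₁ hx₁0 hx₁1
    have hsub : Set.Ico x₁ 1 ⊆ Set.Ico (z' c) 1 := by
      intro y hy; exact ⟨le_trans hcon.le hy.1, hy.2⟩
    have := aux_deriv_nonpos_of_strictAntiOn hD hx₁1 (hanti.mono hsub)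
    have hDpos : 0 < ((1 - x₁) ^ 2 - c * x₁ ^ 2 * (2 - x₁)) / (x₁ * (1 - x₁) ^ 2) := by
      exact div_pos hnum₁ (mul_pos hx₁0 (pow_pos (by linarith) 2))
    linarith
  -- Lower bound: z' c ≤ x₂ := 1 - (1-δ)s
  set x₂ : ℝ := 1 - (1 - δ) * s with hx₂def
  have hx₂0 : 0 < x₂ := by nlinarith
  have hx₂1 : x₂ < 1 := by nlinarith
  have hnum₂ : (1 - x₂) ^ 2 - c * x₂ ^ 2 * (2 - x₂) < 0 := by
    have h1x : 1 - x₂ = (1 - δ) * s := by ring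
    have hgt : 1 - δ < x₂ := by nlinarith
    have hx2sq : (1 - δ) ^ 2 < x₂ ^ 2 := by nlinarith
    have hge : x₂ ^ 2 ≤ x₂ ^ 2 * (2 - x₂) := by
      nlinarith [mul_nonneg (sq_nonneg x₂) (by linarith : (0:ℝ) ≤ 1 - x₂)]
    have hkey : (1 - δ) ^ 2 < x₂ ^ 2 * (2 - x₂) := by linarith
    nlinarith [mul_pos hspos hspos, mul_lt_mul_of_pos_left hkey (mul_pos hspos hspos)]
  have hlow : z' c ≤ x₂ := by
    by_contra hcon
    push_neg at hcon
    have hD := aux_phase_hasDerivAt a c x₂ hx₂0 hx₂1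
    have hsub : Set.Ioc 0 x₂ ⊆ Set.Ioc 0 (z' c) := by
      intro y hy; exact ⟨hy.1, le_trans hy.2 hcon.le⟩
    have := aux_deriv_nonneg_of_strictMonoOn hD hx₂0 (hmono.mono hsub)
    have hDneg : ((1 - x₂) ^ 2 - c * x₂ ^ 2 * (2 - x₂)) / (x₂ * (1 - x₂) ^ 2) < 0 := by
      exact div_neg_of_neg_of_pos hnum₂ (mul_pos hx₂0 (pow_pos (by linarith) 2))
    linarith
  -- Conclude
  have hq1 : (1 - z' c) / s ≤ 1 + δ := by
    rw [div_le_iff₀ hspos]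
    have : 1 - z' c ≤ (1 + δ) * s := by
      have : (1 + δ) * s = 1 - x₁ := by ring
      linarith
    linarith
  have hq2 : 1 - δ ≤ (1 - z' c) / s := by
    rw [le_div_iff₀ hspos]
    have : (1 - δ) * s = 1 - x₂ := by ring
    linarith
  rw [Real.dist_eq]
  have : |(1 - z' c) / s - 1| ≤ δ := abs_le.mpr ⟨by linarith, by linarith⟩
  exact lt_of_le_of_lt this hδε
end

section
/- Let a > 1 be a fixed real number, and for each c > 0 let z'(c) ∈ (0,1) be the unique maximizer of φ_{a,c} on (0,1). Then (log a − φ_{a,c}(z'(c)))/√c tends to 2 as c tends to 0 from above; in particular the maximum value satisfies φ_{a,c}(z'(c)) = log a − 2√c + o(√c), and it is positive for all sufficiently small c. -/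
open Filter Real Set Topology

private lemma amgm (x y : ℝ) (hx : 0 ≤ x) (hy : 0 ≤ y) :
    2 * Real.sqrt (x * y) ≤ x + y := by
  nlinarith [sq_nonneg (Real.sqrt x - Real.sqrt y), Real.sq_sqrt hx, Real.sq_sqrt hy,
    Real.sqrt_mul hx y, Real.sqrt_nonneg x, Real.sqrt_nonneg y]

private lemma log_one_sub_slope :
    Filter.Tendsto (fun t : ℝ => -Real.log (1 - t) / t) (nhdsWithin 0 (Set.Ioi 0)) (nhds 1) := by
  have hd : HasDerivAt (fun t : ℝ => Real.log (1 - t)) (-1) 0 := by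
    have h1 : HasDerivAt (fun t : ℝ => 1 - t) (-1) 0 := by
      simpa using (hasDerivAt_id (0:ℝ)).const_sub 1
    have h2 : HasDerivAt Real.log 1 ((fun t : ℝ => 1 - t) 0) := by
      simpa using Real.hasDerivAt_log (by norm_num : ((1:ℝ) - 0) ≠ 0)
    have h3 := h2.comp 0 h1
    rw [one_mul] at h3
    exact h3
  have hs := hasDerivAt_iff_tendsto_slope.mp hd
  have h3 : Filter.Tendsto (fun t : ℝ => Real.log (1 - t) / t) (nhdsWithin 0 (Set.Ioi 0)) (nhds (-1)) := by
    have h4 : Filter.Tendsto (slope (fun t : ℝ => Real.log (1 - t)) 0)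
        (nhdsWithin 0 (Set.Ioi 0)) (nhds (-1)) :=
      hs.mono_left (nhdsWithin_mono _ (fun x hx => ne_of_gt hx))
    refine h4.congr (fun t => ?_)
    simp [slope_def_field]
  have h5 := h3.neg
  simp only [← neg_div] at h5
  simpa using h5

/-- For fixed `a > 1`, if `z'(c)` is the unique maximizer of the anabolic phase function
`φ_{a,c}(z) = log z + log a − c·z²/(1−z)` on `(0,1)`, then
`(log a − φ_{a,c}(z'(c)))/√c → 2` as `c → 0⁺` (i.e. the maximum is `log a − 2√c + o(√c)`),
and the maximum value is positive for all sufficiently small `c`. -/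
theorem stmt_4 (a : ℝ) (ha : 1 < a) (z' : ℝ → ℝ)
    (h : ∀ c : ℝ, 0 < c →
      z' c ∈ Set.Ioo (0 : ℝ) 1 ∧
      ∀ z ∈ Set.Ioo (0 : ℝ) 1, z ≠ z' c →
        Real.log z + Real.log a - c * z ^ 2 / (1 - z) <
          Real.log (z' c) + Real.log a - c * (z' c) ^ 2 / (1 - z' c)) :
    Filter.Tendsto
      (fun c : ℝ =>
        (Real.log a -
          (Real.log (z' c) + Real.log a - c * (z' c) ^ 2 / (1 - z' c))) / Real.sqrt c)
      (nhdsWithin 0 (Set.Ioi 0)) (nhds 2) ∧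
    ∃ c₀ > (0 : ℝ), ∀ c : ℝ, 0 < c → c < c₀ →
      0 < Real.log (z' c) + Real.log a - c * (z' c) ^ 2 / (1 - z' c) := by
  have hla : 0 < Real.log a := Real.log_pos ha
  set F : ℝ → ℝ := fun c => -Real.log (z' c) + c * (z' c)^2 / (1 - z' c) with hF
  set G : ℝ → ℝ := fun c => -Real.log (1 - Real.sqrt c) + Real.sqrt c * (1 - Real.sqrt c)^2
    with hGdef
  -- the goal's numerator equals F c
  have hgoal : ∀ c : ℝ,
      Real.log a - (Real.log (z' c) + Real.log a - c * (z' c) ^ 2 / (1 - z' c)) = F c := by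
    intro c; simp [hF]; ring
  -- key pointwise inequalities
  have key : ∀ c : ℝ, 0 < c → c < 1 →
      1 - z' c ≤ F c ∧ 2 * Real.sqrt c * z' c ≤ F c ∧ F c ≤ G c := by
    intro c hc hc1
    obtain ⟨⟨hz0, hz1⟩, hmax⟩ := h c hc
    have hzpos : (0:ℝ) < 1 - z' c := by linarith
    have hterm : 0 ≤ c * (z' c)^2 / (1 - z' c) :=
      div_nonneg (mul_nonneg hc.le (sq_nonneg _)) hzpos.le
    have hlog : Real.log (z' c) ≤ z' c - 1 := Real.log_le_sub_one_of_pos hz0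
    have hsc : 0 < Real.sqrt c := Real.sqrt_pos.mpr hc
    have hsc1 : Real.sqrt c < 1 := by
      rw [show (1:ℝ) = Real.sqrt 1 by simp]
      exact Real.sqrt_lt_sqrt hc.le hc1
    have hcs : Real.sqrt c * Real.sqrt c = c := Real.mul_self_sqrt hc.le
    refine ⟨by simp only [hF]; linarith, ?_, ?_⟩
    · -- AM-GM lower bound
      have hag := amgm (1 - z' c) (c * (z' c)^2 / (1 - z' c)) hzpos.le hterm
      have hxy : (1 - z' c) * (c * (z' c)^2 / (1 - z' c)) = c * (z' c)^2 := by
        field_simp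
      rw [hxy] at hag
      have hsq : Real.sqrt (c * (z' c)^2) = Real.sqrt c * z' c := by
        rw [Real.sqrt_mul hc.le, Real.sqrt_sq hz0.le]
      rw [hsq] at hag
      simp only [hF]; linarith
    · -- upper bound by testing w = 1 - √c
      set w : ℝ := 1 - Real.sqrt c with hw
      have hw0 : 0 < w := by simp only [hw]; linarith
      have hw1 : w < 1 := by simp only [hw]; linarith
      have h1w : 1 - w = Real.sqrt c := by simp [hw]
      have hGw : -Real.log w + c * w^2 / (1 - w) = G c := by
        have hcw : c * w^2 / (1 - w) = Real.sqrt c * w^2 := by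
          rw [h1w]
          field_simp
          linear_combination -hcs
        simp only [hGdef]
        rw [hcw, hw]
      by_cases hwz : w = z' c
      · simp only [hF, ← hwz]
        linarith [le_of_eq hGw]
      · have hlt := hmax w ⟨hw0, hw1⟩ hwz
        simp only [hF]
        linarith
  -- limits of auxiliary functions
  have hsqrt0 : Filter.Tendsto Real.sqrt (nhdsWithin 0 (Set.Ioi 0))
      (nhdsWithin 0 (Set.Ioi 0)) := by
    apply tendsto_nhdsWithin_of_tendsto_nhds_of_eventually_within
    · exact (Real.continuous_sqrt.tendsto' 0 0 (by simp)).mono_left nhdsWithin_le_nhds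
    · filter_upwards [self_mem_nhdsWithin] with c hc
      exact Real.sqrt_pos.mpr hc
  have hsqrt0' : Filter.Tendsto Real.sqrt (nhdsWithin 0 (Set.Ioi 0)) (nhds 0) :=
    hsqrt0.mono_right nhdsWithin_le_nhds
  -- G c / √c → 2
  have hpow : Filter.Tendsto (fun t : ℝ => (1 - t)^2) (nhdsWithin 0 (Set.Ioi 0)) (nhds 1) := by
    have : Filter.Tendsto (fun t : ℝ => (1 - t)^2) (nhds 0) (nhds 1) := by
      have hcont : Continuous fun t : ℝ => (1 - t)^2 := by continuity
      simpa using hcont.tendsto 0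
    exact this.mono_left nhdsWithin_le_nhds
  have hinner : Filter.Tendsto (fun t : ℝ => -Real.log (1 - t) / t + (1 - t)^2)
      (nhdsWithin 0 (Set.Ioi 0)) (nhds 2) := by
    have h6 := log_one_sub_slope.add hpow
    exact (by norm_num : (1:ℝ) + 1 = 2) ▸ h6
  have hGdiv : Filter.Tendsto (fun c : ℝ => G c / Real.sqrt c)
      (nhdsWithin 0 (Set.Ioi 0)) (nhds 2) := by
    have hcomp := hinner.comp hsqrt0
    refine hcomp.congr' ?_
    filter_upwards [self_mem_nhdsWithin] with c (hc : 0 < c)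
    have hsc : Real.sqrt c ≠ 0 := (Real.sqrt_pos.mpr hc).ne'
    simp only [Function.comp, hGdef]
    field_simp
  have hG0 : Filter.Tendsto G (nhdsWithin 0 (Set.Ioi 0)) (nhds 0) := by
    have := hGdiv.mul hsqrt0'
    have h2 : Filter.Tendsto (fun c : ℝ => G c / Real.sqrt c * Real.sqrt c)
        (nhdsWithin 0 (Set.Ioi 0)) (nhds 0) := by simpa using this
    refine h2.congr' ?_
    filter_upwards [self_mem_nhdsWithin] with c (hc : 0 < c)
    have hsc : Real.sqrt c ≠ 0 := (Real.sqrt_pos.mpr hc).ne'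
    field_simp
  have hmemIoo : Set.Ioo (0:ℝ) 1 ∈ nhdsWithin (0:ℝ) (Set.Ioi 0) :=
    Ioo_mem_nhdsGT_of_mem ⟨le_refl 0, one_pos⟩
  -- z' c → 1
  have hz'1 : Filter.Tendsto z' (nhdsWithin 0 (Set.Ioi 0)) (nhds 1) := by
    refine tendsto_of_tendsto_of_tendsto_of_le_of_le' (g := fun c => 1 - G c)
      (h := fun _ : ℝ => (1:ℝ)) ?_ ?_ ?_ ?_
    · simpa using (tendsto_const_nhds (x := (1:ℝ))).sub hG0
    · exact tendsto_const_nhds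
    · filter_upwards [hmemIoo] with c hc
      obtain ⟨h1, _, h3⟩ := key c hc.1 hc.2
      linarith
    · filter_upwards [hmemIoo] with c hc
      exact ((h c hc.1).1.2).le
  -- first part: squeeze
  have hmain : Filter.Tendsto (fun c : ℝ => F c / Real.sqrt c)
      (nhdsWithin 0 (Set.Ioi 0)) (nhds 2) := by
    refine tendsto_of_tendsto_of_tendsto_of_le_of_le' (g := fun c => 2 * z' c)
      (h := fun c => G c / Real.sqrt c) ?_ ?_ ?_ ?_
    · have := hz'1.const_mul 2
      simpa using this
    · exact hGdiv
    · filter_upwards [hmemIoo] with c hc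
      obtain ⟨_, h2, _⟩ := key c hc.1 hc.2
      have hsc : 0 < Real.sqrt c := Real.sqrt_pos.mpr hc.1
      rw [le_div_iff₀ hsc]
      linarith
    · filter_upwards [hmemIoo] with c hc
      obtain ⟨_, _, h3⟩ := key c hc.1 hc.2
      have hsc : 0 < Real.sqrt c := Real.sqrt_pos.mpr hc.1
      gcongr
  constructor
  · refine hmain.congr (fun c => ?_)
    rw [hgoal c]
  · -- positivity for small c
    have h1 : ∀ᶠ c in nhdsWithin (0:ℝ) (Set.Ioi 0), F c < Real.log a := by
      have h2 : ∀ᶠ c in nhdsWithin (0:ℝ) (Set.Ioi 0), G c < Real.log a :=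
        hG0.eventually_lt_const hla
      filter_upwards [h2, hmemIoo] with c hc2 hc
      exact lt_of_le_of_lt (key c hc.1 hc.2).2.2 hc2
    rw [eventually_nhdsWithin_iff, Metric.eventually_nhds_iff] at h1
    obtain ⟨ε, hε, hball⟩ := h1
    refine ⟨ε, hε, fun c hc hcε => ?_⟩
    have hd : dist c 0 < ε := by
      rw [Real.dist_eq, sub_zero, abs_of_pos hc]; exact hcε
    have := hball hd hc
    have hFc : F c < Real.log a := this
    have := hgoal c
    simp only [hF] at hFc
    linarith
end

section
/- Let a ≥ 3 be a real number and let c be a real number with 0 < c < 1/4. Then φ_{a,c}(1 − √c) ≥ log a − 1 > 0; in particular the supremum of φ_{a,c} over (0,1) is positive. -/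
/-- If `a ≥ 3` and `0 < c < 1/4` then the anabolic phase function
`φ_{a,c}(z) = log z + log a − c·z²/(1−z)` satisfies `φ_{a,c}(1 − √c) ≥ log a − 1 > 0`;
in particular its supremum over `(0,1)` is positive. -/
theorem stmt_5 (a c : ℝ) (ha : 3 ≤ a) (hc : 0 < c) (hc' : c < 1 / 4) :
    Real.log a - 1 ≤
        Real.log (1 - Real.sqrt c) + Real.log a
          - c * (1 - Real.sqrt c) ^ 2 / (1 - (1 - Real.sqrt c)) ∧
    0 < Real.log a - 1 ∧
    ∃ z ∈ Set.Ioo (0 : ℝ) 1,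
      0 < Real.log z + Real.log a - c * z ^ 2 / (1 - z) := by
  set s := Real.sqrt c with hs_def
  have hs0 : 0 < s := Real.sqrt_pos.mpr hc
  have hs2 : s ^ 2 = c := Real.sq_sqrt hc.le
  have hshalf : s < 1 / 2 := by
    have h := Real.sqrt_lt_sqrt hc.le hc'
    have h4 : Real.sqrt (1/4) = 1/2 := by
      rw [show (1/4 : ℝ) = (1/2)^2 by norm_num, Real.sqrt_sq (by norm_num : (0:ℝ) ≤ 1/2)]
    rw [h4] at h; exact h
  have h1s : (0:ℝ) < 1 - s := by linarith
  -- log lower bound: log (1-s) ≥ -(s+s^2)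
  have hx0 : (0:ℝ) ≤ s + s^2 := by positivity
  have hsum := Real.sum_le_exp_of_nonneg hx0 4
  have hexp : 1 + (s+s^2) + (s+s^2)^2/2 + (s+s^2)^3/6 ≤ Real.exp (s+s^2) := by
    have : ∑ i ∈ Finset.range 4, (s+s^2)^i / (Nat.factorial i) =
        1 + (s+s^2) + (s+s^2)^2/2 + (s+s^2)^3/6 := by
      norm_num [Finset.sum_range_succ, Nat.factorial]; try ring
    linarith [hsum, this.le, this.ge]
  have hpow : ∀ n : ℕ, s ^ (n + 1) ≤ s ^ n / 2 := by
    intro n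
    have := mul_le_mul_of_nonneg_left hshalf.le (pow_nonneg hs0.le n)
    calc s ^ (n+1) = s ^ n * s := by ring
      _ ≤ s ^ n * (1/2) := this
      _ = s ^ n / 2 := by ring
  have hpoly : 1 ≤ (1 - s) * (1 + (s+s^2) + (s+s^2)^2/2 + (s+s^2)^3/6) := by
    have h3 := hpow 2
    have h4 := hpow 3
    have h5 := hpow 4
    have h6 := hpow 5
    have h7 := hpow 6
    nlinarith [sq_nonneg s]
  have hkey : 1 ≤ (1 - s) * Real.exp (s + s^2) :=
    hpoly.trans (mul_le_mul_of_nonneg_left hexp h1s.le)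
  have hlog : -(s + s^2) ≤ Real.log (1 - s) := by
    rw [Real.le_log_iff_exp_le h1s, Real.exp_neg]
    rw [inv_le_iff_one_le_mul₀' (Real.exp_pos _)]
    linarith [hkey]
  -- main inequality
  have hmain : Real.log a - 1 ≤
      Real.log (1 - s) + Real.log a - c * (1 - s) ^ 2 / (1 - (1 - s)) := by
    have h1 : (1 : ℝ) - (1 - s) = s := by ring
    rw [h1]
    have h2 : c * (1 - s)^2 / s = s * (1 - s)^2 := by
      rw [← hs2]; field_simp
    rw [h2]
    nlinarith [hlog, hs0.le, hshalf.le, sq_nonneg s, sq_nonneg (s - 1/2)]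
  have hpos : 0 < Real.log a - 1 := by
    have he : Real.exp 1 < a := by
      have := Real.exp_one_lt_d9
      linarith
    have := Real.log_lt_log (Real.exp_pos 1) he
    rw [Real.log_exp] at this
    linarith
  refine ⟨hmain, hpos, ⟨1 - s, ⟨by linarith, by linarith⟩, by linarith⟩⟩
end

section
/- Let a ≥ 2 be a real number and let c > a²/(2e), where e is Euler's number. Then φ_{a,c}(z) < 0 for every z ∈ (0,1), i.e. the anabolic phase function is everywhere negative on (0,1). -/
/-!
The tangent line of `log` at `e` passes through the origin, so `log x ≤ x / e`; applied to
`x = (a z)²` this gives `log z + log a = log (a z) ≤ a² z² / (2e) < c z² ≤ c z² / (1 - z)`.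
-/

open Real

lemma Real.log_le_div_exp_one {x : ℝ} (hx : 0 ≤ x) : log x ≤ x / exp 1 := by
  obtain rfl | hx := hx.eq_or_lt
  · simp
  have h := log_le_sub_one_of_pos (div_pos hx (exp_pos 1))
  rw [log_div hx.ne' (exp_pos 1).ne', log_exp] at h
  linarith

lemma Real.log_le_sq_div_two_mul_exp_one (t : ℝ) : log t ≤ t ^ 2 / (2 * exp 1) := by
  have h := log_le_div_exp_one (sq_nonneg t)
  rw [log_pow] at h
  rw [div_mul_eq_div_div_swap]
  push_cast at h
  linarith

lemma Real.log_add_log_le_sq_div_two_mul_exp_one {z : ℝ} (hz₀ : 0 < z) (hz₁ : z ≤ 1) (a : ℝ) :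
    log z + log a ≤ (a * z) ^ 2 / (2 * exp 1) := by
  obtain rfl | ha := eq_or_ne a 0
  · simpa using log_nonpos hz₀.le hz₁
  rw [add_comm, ← log_mul ha hz₀.ne']
  exact log_le_sq_div_two_mul_exp_one _

theorem stmt_6_general (a c : ℝ) (hc : a ^ 2 / (2 * Real.exp 1) < c) :
    ∀ z ∈ Set.Ioo (0 : ℝ) 1,
      Real.log z + Real.log a - c * z ^ 2 / (1 - z) < 0 := by
  rintro z ⟨hz₀, hz₁⟩
  have hc₀ : 0 < c := (by positivity : 0 ≤ a ^ 2 / (2 * exp 1)).trans_lt hc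
  have hz₂ : 0 < z ^ 2 := by positivity
  have hcz : 0 ≤ c * z ^ 2 := by positivity
  suffices log z + log a < c * z ^ 2 / (1 - z) by linarith
  calc log z + log a ≤ (a * z) ^ 2 / (2 * exp 1) :=
        log_add_log_le_sq_div_two_mul_exp_one hz₀ hz₁.le a
    _ = a ^ 2 / (2 * exp 1) * z ^ 2 := by ring
    _ < c * z ^ 2 := mul_lt_mul_of_pos_right hc hz₂
    _ ≤ c * z ^ 2 / (1 - z) := le_div_self hcz (by linarith) (by linarith)

/-- If `a ≥ 2` and `c > a²/(2e)`, then the anabolic phase function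
`φ_{a,c}(z) = log z + log a − c·z²/(1−z)` is negative everywhere on `(0,1)`. -/
theorem stmt_6 (a c : ℝ) (ha : 2 ≤ a) (hc : a ^ 2 / (2 * Real.exp 1) < c) :
    ∀ z ∈ Set.Ioo (0 : ℝ) 1,
      Real.log z + Real.log a - c * z ^ 2 / (1 - z) < 0 :=
  stmt_6_general a c hc
end

section
/- Let a > 1 and 0 < q < 1 be real numbers and let φ(z) = log z + log a − q·(z/(1−z))² for z ∈ (0,1). Then there exists z' ∈ (0,1) such that φ is strictly increasing on the interval (0, z'] and strictly decreasing on the interval [z', 1). -/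
open Set Real

/-- Catabolic phase function: for `a > 1` and `0 < q < 1`, the function
`φ(z) = log z + log a − q·(z/(1−z))²` has a unique mode `z'` in `(0,1)`: it is strictly
increasing on `(0, z']` and strictly decreasing on `[z', 1)`. -/
theorem stmt_7 (a q : ℝ) (ha : 1 < a) (hq : 0 < q) (hq1 : q < 1) :
    ∃ z' ∈ Set.Ioo (0 : ℝ) 1,
      StrictMonoOn (fun z : ℝ => Real.log z + Real.log a - q * (z / (1 - z)) ^ 2)
        (Set.Ioc 0 z') ∧
      StrictAntiOn (fun z : ℝ => Real.log z + Real.log a - q * (z / (1 - z)) ^ 2)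
        (Set.Ico z' 1) := by
  set f : ℝ → ℝ := fun z => Real.log z + Real.log a - q * (z / (1 - z)) ^ 2 with hf
  set g : ℝ → ℝ := fun z => (1 - z) ^ 3 - 2 * q * z ^ 2 with hg
  -- find the root z' of g in (0,1)
  have hg_cont : ContinuousOn g (Icc (0:ℝ) 1) := by fun_prop
  have hiv := intermediate_value_Ioo' (le_of_lt one_pos) hg_cont
  have h0mem : (0:ℝ) ∈ Ioo (g 1) (g 0) := by
    constructor <;> simp [hg] <;> nlinarith
  obtain ⟨z', hz'mem, hgz'⟩ := hiv h0mem
  have hz0 : 0 < z' := hz'mem.1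
  have hz1 : z' < 1 := hz'mem.2
  -- derivative of f on (0,1)
  have hderiv : ∀ z ∈ Ioo (0:ℝ) 1,
      HasDerivAt f (((1 - z) ^ 3 - 2 * q * z ^ 2) / (z * (1 - z) ^ 3)) z := by
    intro z hz
    have hz0' : z ≠ 0 := ne_of_gt hz.1
    have hz1' : (1 - z) ≠ 0 := sub_ne_zero.2 (ne_of_gt hz.2)
    have h1 : HasDerivAt Real.log (1 / z) z := by
      simpa [one_div] using Real.hasDerivAt_log hz0'
    have h2 : HasDerivAt (fun z : ℝ => z / (1 - z))
        ((1 * (1 - z) - z * (0 - 1)) / (1 - z) ^ 2) z :=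
      (hasDerivAt_id z).div ((hasDerivAt_const z 1).sub (hasDerivAt_id z)) hz1'
    have h3 : HasDerivAt (fun z : ℝ => (z / (1 - z)) ^ 2)
        (2 * (z / (1 - z)) ^ 1 * ((1 * (1 - z) - z * (0 - 1)) / (1 - z) ^ 2)) z := by
      simpa using h2.fun_pow 2
    have h4 := (h1.add_const (Real.log a)).fun_sub (h3.const_mul q)
    refine h4.congr_deriv ?_
    field_simp
    ring
  have hsub1 : Ioc (0:ℝ) z' ⊆ Ioo (0:ℝ) 1 := fun x hx => ⟨hx.1, lt_of_le_of_lt hx.2 hz1⟩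
  have hsub2 : Ico z' (1:ℝ) ⊆ Ioo (0:ℝ) 1 := fun x hx => ⟨lt_of_lt_of_le hz0 hx.1, hx.2⟩
  refine ⟨z', hz'mem, ?_, ?_⟩
  · apply strictMonoOn_of_deriv_pos (convex_Ioc 0 z')
    · intro x hx
      exact (hderiv x (hsub1 hx)).continuousAt.continuousWithinAt
    · intro x hx
      rw [interior_Ioc] at hx
      have hx' : x ∈ Ioo (0:ℝ) 1 := ⟨hx.1, lt_trans hx.2 hz1⟩
      rw [(hderiv x hx').deriv]
      apply div_pos
      · have : g z' = 0 := hgz'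
        simp only [hg] at this
        have hd : 0 < z' - x := sub_pos.2 hx.2
        have h1x : 0 < 1 - x := sub_pos.2 hx'.2
        have h1z : 0 < 1 - z' := sub_pos.2 hz1
        nlinarith [mul_pos hq (mul_pos hd (add_pos hx.1 hz0)),
          mul_pos hd (mul_pos h1x h1z), mul_pos hd (mul_pos h1x h1x),
          mul_pos hd (mul_pos h1z h1z)]
      · exact mul_pos hx'.1 (pow_pos (sub_pos.2 hx'.2) 3)
  · apply strictAntiOn_of_deriv_neg (convex_Ico z' 1)
    · intro x hx
      exact (hderiv x (hsub2 hx)).continuousAt.continuousWithinAt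
    · intro x hx
      rw [interior_Ico] at hx
      have hx' : x ∈ Ioo (0:ℝ) 1 := ⟨lt_trans hz0 hx.1, hx.2⟩
      rw [(hderiv x hx').deriv]
      apply div_neg_of_neg_of_pos
      · have : g z' = 0 := hgz'
        simp only [hg] at this
        have hd : 0 < x - z' := sub_pos.2 hx.1
        have h1x : 0 < 1 - x := sub_pos.2 hx'.2
        have h1z : 0 < 1 - z' := sub_pos.2 hz1
        nlinarith [mul_pos hq (mul_pos hd (add_pos hx'.1 hz0)),
          mul_pos hd (mul_pos h1x h1z), mul_pos hd (mul_pos h1x h1x),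
          mul_pos hd (mul_pos h1z h1z)]
      · exact mul_pos hx'.1 (pow_pos (sub_pos.2 hx'.2) 3)
end

section
/- Let a > 1 be a fixed real number, and for each q ∈ (0,1) let z'(q) ∈ (0,1) be the unique point such that φ_{a,q} is strictly increasing on (0, z'(q)] and strictly decreasing on [z'(q), 1). Then (1 − z'(q))/(2q)^{1/3} tends to 1 as q tends to 0 from above, i.e. 1 − z'(q) ∼ (2q)^{1/3} as q → 0⁺. -/
private lemma phi_hasDeriv (a q z : ℝ) (hz0 : 0 < z) (hz1 : z < 1) :
    HasDerivAt (fun z : ℝ => Real.log z + Real.log a - q * (z / (1 - z)) ^ 2)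
      (1 / z - 2 * q * z / (1 - z) ^ 3) z := by
  have h1 : (1 : ℝ) - z ≠ 0 := by linarith
  have hg : HasDerivAt (fun z : ℝ => z / (1 - z))
      ((1 * (1 - z) - z * (0 - 1)) / (1 - z) ^ 2) z :=
    (hasDerivAt_id z).div ((hasDerivAt_const z 1).sub (hasDerivAt_id z)) h1
  have hg2 := hg.pow 2
  have hlog := (Real.hasDerivAt_log hz0.ne').add_const (Real.log a)
  have := hlog.sub (hg2.const_mul q)
  refine this.congr_deriv ?_
  norm_num
  field_simp

set_option maxHeartbeats 1600000 in
/-- For fixed `a > 1`, if `z'(q)` denotes the unique mode of the catabolic phase function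
`φ_{a,q}(z) = log z + log a − q·(z/(1−z))²` (strictly increasing before `z'(q)`, strictly
decreasing after), then `1 − z'(q) ∼ (2q)^{1/3}` as `q → 0⁺`. -/
theorem stmt_8 (a : ℝ) (ha : 1 < a) (z' : ℝ → ℝ)
    (h : ∀ q : ℝ, 0 < q → q < 1 →
      z' q ∈ Set.Ioo (0 : ℝ) 1 ∧
      StrictMonoOn (fun z : ℝ => Real.log z + Real.log a - q * (z / (1 - z)) ^ 2)
        (Set.Ioc 0 (z' q)) ∧
      StrictAntiOn (fun z : ℝ => Real.log z + Real.log a - q * (z / (1 - z)) ^ 2)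
        (Set.Ico (z' q) 1)) :
    Filter.Tendsto (fun q : ℝ => (1 - z' q) / (2 * q) ^ ((1 : ℝ) / 3))
      (nhdsWithin 0 (Set.Ioi 0)) (nhds 1) := by
  set φ : ℝ → ℝ → ℝ := fun q z => Real.log z + Real.log a - q * (z / (1 - z)) ^ 2 with hφ
  -- Lemma A : if 2q ≤ (1-z₁)³ and z₁ ∈ (0,1) then z₁ ≤ z' q
  have lemA : ∀ q z1 : ℝ, 0 < q → q < 1 → 0 < z1 → z1 < 1 → 2 * q ≤ (1 - z1) ^ 3 →
      z1 ≤ z' q := by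
    intro q z1 hq hq1 hz10 hz11 hcond
    by_contra hlt
    push_neg at hlt
    obtain ⟨⟨hw0, hw1⟩, _, hanti⟩ := h q hq hq1
    set u := (z' q + z1) / 2 with hu
    have hu1 : z' q < u := by simp only [hu]; linarith
    have hu2 : u < z1 := by simp only [hu]; linarith
    have hu0 : 0 < u := by simp only [hu]; linarith
    -- φ q is strictly increasing on [u, z1]
    have hmono : StrictMonoOn (φ q) (Set.Icc u z1) := by
      apply strictMonoOn_of_deriv_pos (convex_Icc u z1)
      · intro x hx
        exact (phi_hasDeriv a q x (lt_of_lt_of_le hu0 hx.1)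
          (lt_of_le_of_lt hx.2 hz11)).continuousAt.continuousWithinAt
      · intro x hx
        rw [interior_Icc] at hx
        have hx0 : 0 < x := lt_trans hu0 hx.1
        have hx1 : x < 1 := lt_trans hx.2 hz11
        rw [(phi_hasDeriv a q x hx0 hx1).deriv]
        have h1x : 0 < 1 - x := by linarith
        have h1 : (1 - z1) ^ 3 ≤ (1 - x) ^ 3 :=
          pow_le_pow_left₀ (by linarith) (by linarith [hx.2]) 3
        have h2 : 2 * q * x < 2 * q := by nlinarith
        have key : 2 * q * x < (1 - x) ^ 3 := by linarith
        have h3 : 2 * q * x / (1 - x) ^ 3 < 1 := (div_lt_one (by positivity)).mpr key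
        have h5 : (1 : ℝ) ≤ 1 / x := by
          rw [le_div_iff₀ hx0]; linarith
        linarith
    have e1 : φ q u < φ q z1 := hmono (Set.left_mem_Icc.mpr hu2.le)
      (Set.right_mem_Icc.mpr hu2.le) hu2
    have e2 : φ q z1 < φ q u := hanti ⟨hu1.le, by linarith⟩ ⟨by linarith, hz11⟩ hu2
    linarith
  -- Lemma B : if (1-z₂)³ < 2q·z₂² and z₂ ∈ (0,1) then z' q ≤ z₂
  have lemB : ∀ q z2 : ℝ, 0 < q → q < 1 → 0 < z2 → z2 < 1 →
      (1 - z2) ^ 3 < 2 * q * z2 ^ 2 → z' q ≤ z2 := by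
    intro q z2 hq hq1 hz20 hz21 hcond
    by_contra hlt
    push_neg at hlt
    obtain ⟨⟨hw0, hw1⟩, hmono, _⟩ := h q hq hq1
    set v := (z2 + z' q) / 2 with hv
    have hv1 : z2 < v := by simp only [hv]; linarith
    have hv2 : v < z' q := by simp only [hv]; linarith
    have hvlt1 : v < 1 := lt_trans hv2 hw1
    have hanti2 : StrictAntiOn (φ q) (Set.Icc z2 v) := by
      apply strictAntiOn_of_deriv_neg (convex_Icc z2 v)
      · intro x hx
        exact (phi_hasDeriv a q x (lt_of_lt_of_le hz20 hx.1)
          (lt_of_le_of_lt hx.2 hvlt1)).continuousAt.continuousWithinAt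
      · intro x hx
        rw [interior_Icc] at hx
        have hx0 : 0 < x := lt_trans hz20 hx.1
        have hx1 : x < 1 := lt_trans hx.2 hvlt1
        rw [(phi_hasDeriv a q x hx0 hx1).deriv]
        have h1x : 0 < 1 - x := by linarith
        have h1 : (1 - x) ^ 3 ≤ (1 - z2) ^ 3 :=
          pow_le_pow_left₀ (by linarith) (by linarith [hx.1]) 3
        have hx2 : z2 ^ 2 ≤ x ^ 2 := by nlinarith [hx.1]
        have h2 : 2 * q * z2 ^ 2 ≤ 2 * q * x ^ 2 :=
          mul_le_mul_of_nonneg_left hx2 (by positivity)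
        have key : (1 - x) ^ 3 < 2 * q * x ^ 2 := by linarith
        have h5 : 1 / x < 2 * q * x / (1 - x) ^ 3 := by
          rw [div_lt_div_iff₀ hx0 (by positivity)]
          nlinarith
        linarith
    have e1 : φ q z2 > φ q v := hanti2 (Set.left_mem_Icc.mpr hv1.le)
      (Set.right_mem_Icc.mpr hv1.le) hv1
    have e2 : φ q z2 < φ q v := hmono ⟨hz20, by linarith⟩ ⟨by linarith, hv2.le⟩ hv1
    linarith
  -- main squeeze
  rw [Metric.tendsto_nhdsWithin_nhds]
  intro ε hε
  set ε' := min (ε / 2) (1 / 2 : ℝ) with hε'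
  have hε'0 : 0 < ε' := lt_min (by linarith) (by norm_num)
  have hε'le : ε' ≤ 1 / 2 := min_le_right _ _
  have hε'ε : ε' < ε := lt_of_le_of_lt (min_le_left _ _) (by linarith)
  refine ⟨min (ε' ^ 3 / 2) (1 / 16 : ℝ), lt_min (by positivity) (by norm_num), ?_⟩
  intro q hq hdist
  simp only [Set.mem_Ioi] at hq
  rw [Real.dist_eq, sub_zero, abs_of_pos hq] at hdist
  have hq16 : q < 1 / 16 := lt_of_lt_of_le hdist (min_le_right _ _)
  have hqe : q ≤ ε' ^ 3 / 2 := le_of_lt (lt_of_lt_of_le hdist (min_le_left _ _))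
  have hq1 : q < 1 := by linarith
  set t := (2 * q) ^ ((1 : ℝ) / 3) with hT
  have ht0 : 0 < t := Real.rpow_pos_of_pos (by linarith) _
  have ht3 : t ^ 3 = 2 * q := by
    rw [hT, ← Real.rpow_natCast ((2*q) ^ ((1:ℝ)/3)) 3, ← Real.rpow_mul (by linarith)]
    norm_num
  have htle : t ≤ ε' := by
    nlinarith [sq_nonneg (t - ε'), sq_nonneg (t + ε'), sq_nonneg t, sq_nonneg ε']
  have ht12 : t ≤ 1 / 2 := le_trans htle hε'le
  -- lower bound : z1 ≤ z' q
  set z1 := 1 - (1 + ε') * t with hz1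
  have hz10 : 0 < z1 := by
    have : (1 + ε') * t ≤ (3/2) * (1/2) := by
      apply mul_le_mul (by linarith) ht12 ht0.le (by norm_num)
    simp only [hz1]; linarith
  have hz11 : z1 < 1 := by
    simp only [hz1]; nlinarith
  have hA : z1 ≤ z' q := by
    apply lemA q z1 hq hq1 hz10 hz11
    have : (1 - z1) ^ 3 = (1 + ε') ^ 3 * t ^ 3 := by simp only [hz1]; ring
    rw [this, ht3]
    nlinarith [sq_nonneg ε']
  -- upper bound : z' q ≤ z2
  set z2 := 1 - (1 - ε') * t with hz2
  have hz20 : 0 < z2 := by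
    have : (1 - ε') * t ≤ 1 * (1/2) := by
      apply mul_le_mul (by linarith) ht12 ht0.le (by norm_num)
    simp only [hz2]; linarith
  have hz21 : z2 < 1 := by
    have : 0 < (1 - ε') * t := mul_pos (by linarith) ht0
    simp only [hz2]; linarith
  have hB : z' q ≤ z2 := by
    apply lemB q z2 hq hq1 hz20 hz21
    have e : (1 - z2) ^ 3 = (1 - ε') ^ 3 * (2 * q) := by
      simp only [hz2]; rw [← ht3]; ring
    rw [e]
    have hz2ge : 1 - ε' ≤ z2 := by
      have : (1 - ε') * t ≤ ε' := by
        calc (1 - ε') * t ≤ 1 * t := by nlinarith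
        _ = t := by ring
        _ ≤ ε' := htle
      simp only [hz2]; linarith
    have h10 : (0:ℝ) < 1 - ε' := by linarith
    have h3 : (1 - ε') ^ 3 < (1 - ε') ^ 2 := by nlinarith [sq_nonneg (1 - ε'), mul_pos h10 h10]
    have h2 : (1 - ε') ^ 2 ≤ z2 ^ 2 := pow_le_pow_left₀ (by linarith) hz2ge 2
    have h2q : (0:ℝ) < 2 * q := by linarith
    calc (1 - ε') ^ 3 * (2 * q) < (1 - ε') ^ 2 * (2 * q) := by
          exact mul_lt_mul_of_pos_right h3 h2q
      _ ≤ z2 ^ 2 * (2 * q) := mul_le_mul_of_nonneg_right h2 h2q.le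
      _ = 2 * q * z2 ^ 2 := by ring
  -- conclude
  rw [Real.dist_eq]
  have hb1 : 1 - z' q ≤ (1 + ε') * t := by simp only [hz1] at hA; linarith
  have hb2 : (1 - ε') * t ≤ 1 - z' q := by simp only [hz2] at hB; linarith
  have hub : (1 - z' q) / t ≤ 1 + ε' := by
    rw [div_le_iff₀ ht0]; linarith
  have hlb : 1 - ε' ≤ (1 - z' q) / t := by
    rw [le_div_iff₀ ht0]; linarith
  have habs : |(1 - z' q) / t - 1| ≤ ε' := abs_le.mpr ⟨by linarith, by linarith⟩
  exact lt_of_le_of_lt habs hε'ε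
end

section
/- Let a > 1 be a fixed real number. There exists q₀ ∈ (0,1) such that for every q with 0 < q < q₀, the equation φ_{a,q}(z) = 0 has exactly two solutions z in the open interval (0,1). -/
open Real Set

noncomputable def phi9 (a q z : ℝ) : ℝ := Real.log z + Real.log a - q * (z / (1 - z)) ^ 2

lemma phi9_hasDerivAt (a q z : ℝ) (hz0 : 0 < z) (hz1 : z < 1) :
    HasDerivAt (phi9 a q)
      (((1 - z) ^ 3 - 2 * q * z ^ 2) / (z * (1 - z) ^ 3)) z := by
  have h1 : (1 : ℝ) - z ≠ 0 := by linarith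
  have hz : z ≠ 0 := ne_of_gt hz0
  have hd : HasDerivAt (fun z : ℝ => z / (1 - z)) (1 / (1 - z) ^ 2) z := by
    have := (hasDerivAt_id z).div ((hasDerivAt_const z (1 : ℝ)).sub (hasDerivAt_id z)) h1
    refine this.congr_deriv ?_
    simp only [Pi.sub_apply, id_eq]
    field_simp
    ring
  have hsq : HasDerivAt (fun z : ℝ => (z / (1 - z)) ^ 2)
      (2 * (z / (1 - z)) * (1 / (1 - z) ^ 2)) z := by
    have := hd.pow 2
    refine this.congr_deriv ?_
    push_cast
    ring
  have hlog : HasDerivAt Real.log z⁻¹ z := Real.hasDerivAt_log hz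
  have := (hlog.add_const (Real.log a)).sub (hsq.const_mul q)
  refine this.congr_deriv ?_
  field_simp

lemma sqrt_add_one_sq (x : ℝ) (hx : 0 ≤ x) : x + 1 ≤ (Real.sqrt x + 1) ^ 2 := by
  have h := Real.sq_sqrt hx
  nlinarith [Real.sqrt_nonneg x]

/-- For fixed `a > 1`, there exists `q₀ ∈ (0,1)` such that for every `0 < q < q₀` the
catabolic phase function `φ_{a,q}(z) = log z + log a − q·(z/(1−z))²` has exactly two zeros
in `(0,1)`. -/
theorem stmt_9 (a : ℝ) (ha : 1 < a) :
    ∃ q₀ : ℝ, 0 < q₀ ∧ q₀ < 1 ∧ ∀ q : ℝ, 0 < q → q < q₀ →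
      {z ∈ Set.Ioo (0 : ℝ) 1 |
        Real.log z + Real.log a - q * (z / (1 - z)) ^ 2 = 0}.encard = 2 := by
  have ha0 : 0 < a := lt_trans one_pos ha
  have hane : a ≠ 0 := ne_of_gt ha0
  set z₀ : ℝ := (a⁻¹ + 1) / 2 with hz₀def
  have hainv1 : a⁻¹ < 1 := by
    rw [inv_lt_one_iff₀]; right; exact ha
  have hainv0 : 0 < a⁻¹ := inv_pos.mpr ha0
  have hz₀0 : 0 < z₀ := by positivity
  have hz₀1 : z₀ < 1 := by simp only [hz₀def]; linarith
  set L : ℝ := Real.log z₀ + Real.log a with hLdef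
  have hL : 0 < L := by
    have : L = Real.log (z₀ * a) := (Real.log_mul (ne_of_gt hz₀0) hane).symm
    rw [this]
    apply Real.log_pos
    have : z₀ * a = (1 + a) / 2 := by field_simp [hz₀def]; rw [hz₀def]; field_simp
    rw [this]; linarith
  set C : ℝ := (z₀ / (1 - z₀)) ^ 2 with hCdef
  have hC : 0 ≤ C := sq_nonneg _
  refine ⟨min (1/2) (L / (C + 1)), lt_min (by norm_num) (by positivity), lt_of_le_of_lt (min_le_left _ _) (by norm_num), ?_⟩
  intro q hq0 hq1
  have hqL : q * C < L := by
    have h1 : q < L / (C + 1) := lt_of_lt_of_le hq1 (min_le_right _ _)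
    have h2 : q * (C + 1) < L := by
      have := (lt_div_iff₀ (by linarith : (0:ℝ) < C + 1)).mp h1
      linarith
    nlinarith
  -- continuity
  have hcont : ContinuousOn (phi9 a q) (Ioo 0 1) := fun z hz =>
    ((phi9_hasDerivAt a q z hz.1 hz.2).continuousAt).continuousWithinAt
  -- the auxiliary function g
  set g : ℝ → ℝ := fun z => (1 - z) ^ 3 - 2 * q * z ^ 2 with hgdef
  have hgderiv : ∀ z : ℝ, HasDerivAt g (-3 * (1 - z) ^ 2 - 4 * q * z) z := by
    intro z
    have h1 : HasDerivAt (fun z : ℝ => (1 - z) ^ 3) (-3 * (1 - z) ^ 2) z := by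
      have := ((hasDerivAt_const z (1 : ℝ)).sub (hasDerivAt_id z)).pow 3
      refine this.congr_deriv ?_
      push_cast
      simp only [Pi.sub_apply, id_eq]
      ring
    have h2 : HasDerivAt (fun z : ℝ => 2 * q * z ^ 2) (2 * q * (2 * z)) z := by
      have := (hasDerivAt_pow 2 z).const_mul (2 * q)
      refine this.congr_deriv ?_
      push_cast
      ring
    have := h1.sub h2
    refine this.congr_deriv ?_
    ring
  have hganti : StrictAntiOn g (Icc 0 1) := by
    apply strictAntiOn_of_deriv_neg (convex_Icc 0 1)
    · exact fun z _ => ((hgderiv z).continuousAt).continuousWithinAt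
    · intro z hz
      rw [interior_Icc] at hz
      rw [(hgderiv z).deriv]
      nlinarith [sq_nonneg (1 - z), hz.1, hz.2]
  -- the critical point c
  have hg0 : g 0 = 1 := by simp [hgdef]
  have hg1 : g 1 = -(2 * q) := by simp [hgdef]
  obtain ⟨c, hcmem, hgc⟩ : ∃ c ∈ Ioo (0:ℝ) 1, g c = 0 := by
    have hsub := intermediate_value_Ioo' (by norm_num : (0:ℝ) ≤ 1)
      (Continuous.continuousOn (by fun_prop) : ContinuousOn g (Icc 0 1))
    have : (0 : ℝ) ∈ Ioo (g 1) (g 0) := by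
      rw [hg0, hg1]; constructor <;> [linarith; norm_num]
    obtain ⟨c, hc, hgc⟩ := hsub this
    exact ⟨c, hc, hgc⟩
  have hc0 : 0 < c := hcmem.1
  have hc1 : c < 1 := hcmem.2
  -- sign of g
  have hgpos : ∀ z ∈ Ioo (0:ℝ) c, 0 < g z := by
    intro z hz
    have := hganti ⟨le_of_lt hz.1, le_of_lt (lt_trans hz.2 hc1)⟩
      ⟨le_of_lt hc0, le_of_lt hc1⟩ hz.2
    rw [hgc] at this; exact this
  have hgneg : ∀ z ∈ Ioo c 1, g z < 0 := by
    intro z hz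
    have := hganti ⟨le_of_lt hc0, le_of_lt hc1⟩
      ⟨le_of_lt (lt_trans hc0 hz.1), le_of_lt hz.2⟩ hz.1
    rw [hgc] at this; exact this
  -- monotonicity of phi
  have hmono : StrictMonoOn (phi9 a q) (Ioc 0 c) := by
    apply strictMonoOn_of_deriv_pos (convex_Ioc 0 c)
      (hcont.mono (fun z hz => ⟨hz.1, lt_of_le_of_lt hz.2 hc1⟩))
    intro z hz
    rw [interior_Ioc] at hz
    have hz1 : z < 1 := lt_trans hz.2 hc1
    rw [(phi9_hasDerivAt a q z hz.1 hz1).deriv]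
    apply div_pos (hgpos z hz)
    have h1z : (0:ℝ) < 1 - z := by linarith
    exact mul_pos hz.1 (pow_pos h1z 3)
  have hanti : StrictAntiOn (phi9 a q) (Ico c 1) := by
    apply strictAntiOn_of_deriv_neg (convex_Ico c 1)
      (hcont.mono (fun z hz => ⟨lt_of_lt_of_le hc0 hz.1, hz.2⟩))
    intro z hz
    rw [interior_Ico] at hz
    have hz0 : 0 < z := lt_trans hc0 hz.1
    rw [(phi9_hasDerivAt a q z hz0 hz.2).deriv]
    apply div_neg_of_neg_of_pos (hgneg z hz)
    have h1z : (0:ℝ) < 1 - z := hz.2 |> (by intro h; linarith : z < 1 → (0:ℝ) < 1 - z)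
    exact mul_pos hz0 (pow_pos h1z 3)
  -- phi positive at z₀ and hence at c
  have hφz₀ : 0 < phi9 a q z₀ := by
    have : phi9 a q z₀ = L - q * C := rfl
    rw [this]; linarith
  have hφc : 0 < phi9 a q c := by
    rcases le_or_gt z₀ c with h | h
    · have := hmono.monotoneOn ⟨hz₀0, h⟩ ⟨hc0, le_refl c⟩ h
      linarith
    · have := hanti.antitoneOn ⟨le_refl c, hc1⟩ ⟨le_of_lt h, hz₀1⟩ (le_of_lt h)
      linarith
  -- the left point ε where phi is negative
  set ε : ℝ := min (1 / (2 * a)) (c / 2) with hεdef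
  have hε0 : 0 < ε := lt_min (by positivity) (by positivity)
  have hεc : ε < c := lt_of_le_of_lt (min_le_right _ _) (by linarith)
  have hφε : phi9 a q ε < 0 := by
    have hub : phi9 a q ε ≤ Real.log ε + Real.log a := by
      have : 0 ≤ q * (ε / (1 - ε)) ^ 2 := mul_nonneg (le_of_lt hq0) (sq_nonneg _)
      unfold phi9; linarith
    have hlog1 : Real.log ε ≤ Real.log (1 / (2 * a)) :=
      Real.log_le_log hε0 (min_le_left _ _)
    have hlog2 : Real.log (1 / (2 * a)) = -(Real.log 2 + Real.log a) := by
      rw [one_div, Real.log_inv, Real.log_mul (by norm_num) hane]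
    have hlog2pos : 0 < Real.log 2 := Real.log_pos (by norm_num)
    linarith
  -- left zero
  obtain ⟨x₁, hx₁mem, hφx₁⟩ : ∃ x ∈ Ioo ε c, phi9 a q x = 0 := by
    have hsub := intermediate_value_Ioo (le_of_lt hεc)
      (hcont.mono (fun z hz => ⟨lt_of_lt_of_le hε0 hz.1, lt_of_le_of_lt hz.2 hc1⟩))
    have : (0:ℝ) ∈ Ioo (phi9 a q ε) (phi9 a q c) := ⟨hφε, hφc⟩
    obtain ⟨x, hx, hφx⟩ := hsub this
    exact ⟨x, hx, hφx⟩
  -- the right point d where phi is negative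
  set s : ℝ := Real.sqrt (Real.log a / q) + 1 with hsdef
  have hsnn : 0 ≤ Real.sqrt (Real.log a / q) := Real.sqrt_nonneg _
  have hs1 : 1 ≤ s := by simp only [hsdef]; linarith
  have hs0 : 0 < s := by linarith
  set d : ℝ := max (s / (s + 1)) ((c + 1) / 2) with hddef
  have hcd : c < d := lt_of_lt_of_le (by linarith) (le_max_right _ _)
  have hd1 : d < 1 := by
    apply max_lt
    · rw [div_lt_one (by linarith)]; linarith
    · linarith
  have hd0 : 0 < d := lt_trans hc0 hcd
  have h1d : 0 < 1 - d := by linarith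
  have hds : s ≤ d / (1 - d) := by
    rw [le_div_iff₀ h1d]
    have h1 : s / (s + 1) ≤ d := le_max_left _ _
    have h2 : s ≤ d * (s + 1) := (div_le_iff₀ (by linarith)).mp h1
    nlinarith
  have hlogapos : 0 < Real.log a := Real.log_pos ha
  have hsq : Real.log a / q + 1 ≤ s ^ 2 := by
    rw [hsdef]
    exact sqrt_add_one_sq _ (le_of_lt (div_pos hlogapos hq0))
  clear_value s d
  have hφd : phi9 a q d < 0 := by
    have hlogd : Real.log d < 0 := Real.log_neg hd0 hd1
    have h1 : s ^ 2 ≤ (d / (1 - d)) ^ 2 := pow_le_pow_left₀ (le_of_lt hs0) hds 2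
    have h2 : Real.log a + q ≤ q * s ^ 2 := by
      have : q * (Real.log a / q + 1) ≤ q * s ^ 2 :=
        mul_le_mul_of_nonneg_left hsq (le_of_lt hq0)
      have heq : q * (Real.log a / q + 1) = Real.log a + q := by
        field_simp
      rw [← heq]; exact this
    have h3 : q * s ^ 2 ≤ q * (d / (1 - d)) ^ 2 :=
      mul_le_mul_of_nonneg_left h1 (le_of_lt hq0)
    unfold phi9; linarith
  -- right zero
  obtain ⟨x₂, hx₂mem, hφx₂⟩ : ∃ x ∈ Ioo c d, phi9 a q x = 0 := by
    have hsub := intermediate_value_Ioo' (le_of_lt hcd)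
      (hcont.mono (fun z hz => ⟨lt_of_lt_of_le hc0 hz.1, lt_of_le_of_lt hz.2 hd1⟩))
    have : (0:ℝ) ∈ Ioo (phi9 a q d) (phi9 a q c) := ⟨hφd, hφc⟩
    obtain ⟨x, hx, hφx⟩ := hsub this
    exact ⟨x, hx, hφx⟩
  -- conclude
  have hx₁01 : x₁ ∈ Ioo (0:ℝ) 1 := ⟨lt_trans hε0 hx₁mem.1, lt_trans hx₁mem.2 hc1⟩
  have hx₂01 : x₂ ∈ Ioo (0:ℝ) 1 := ⟨lt_trans hc0 hx₂mem.1, lt_trans hx₂mem.2 hd1⟩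
  have hne : x₁ ≠ x₂ := ne_of_lt (lt_trans hx₁mem.2 hx₂mem.1)
  show ({z ∈ Set.Ioo (0 : ℝ) 1 | phi9 a q z = 0}).encard = 2
  have hset : {z ∈ Set.Ioo (0 : ℝ) 1 | phi9 a q z = 0} = {x₁, x₂} := by
    apply Subset.antisymm
    · rintro z ⟨hz, hφz⟩
      rcases le_or_gt z c with h | h
      · left
        exact hmono.injOn ⟨hz.1, h⟩ ⟨hx₁01.1, le_of_lt hx₁mem.2⟩
          (hφz.trans hφx₁.symm)
      · right
        exact hanti.injOn ⟨le_of_lt h, hz.2⟩ ⟨le_of_lt hx₂mem.1, hx₂01.2⟩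
          (hφz.trans hφx₂.symm)
    · rintro z (rfl | rfl)
      · exact ⟨hx₁01, hφx₁⟩
      · exact ⟨hx₂01, hφx₂⟩
  rw [hset, Set.encard_pair hne]
end

section
/- Let A ≥ 2 and F ≥ 1 be integers and let p, z be real numbers with 0 < p < 1 and 0 < z < 1. Then the sequence of partial products N ↦ ∏_{n=0}^{N−1} (1 − p·zⁿ)^{F·A^{n+1}} converges as N → ∞, and its limit is positive if and only if A·z < 1 (equivalently, the limit equals 0 if and only if z ≥ 1/A). [This is the probability that the completed anabolic reaction network of Model II is empty.] -/
/-- Auxiliary: a product of powers of exponentials is the exponential of a sum. -/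
lemma prod_exp_pow_aux (N : ℕ) (t : ℕ → ℝ) (e : ℕ → ℕ) :
    ∏ n ∈ Finset.range N, (Real.exp (t n)) ^ (e n) =
      Real.exp (∑ n ∈ Finset.range N, (e n : ℝ) * t n) := by
  rw [Real.exp_sum]
  exact Finset.prod_congr rfl fun n _ => by rw [← Real.exp_nat_mul]

/-- Probability that the completed anabolic reaction network of Model II is empty:
the partial products `∏_{n=0}^{N−1} (1 − p·zⁿ)^{F·A^{n+1}}` converge as `N → ∞`, and the
limit is positive iff `A·z < 1`, equivalently it vanishes iff `z ≥ 1/A`. -/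
theorem stmt_11 (A F : ℕ) (hA : 2 ≤ A) (hF : 1 ≤ F) (p z : ℝ)
    (hp : 0 < p) (hp1 : p < 1) (hz : 0 < z) (hz1 : z < 1) :
    ∃ L : ℝ,
      Filter.Tendsto
        (fun N : ℕ => ∏ n ∈ Finset.range N, (1 - p * z ^ n) ^ (F * A ^ (n + 1)))
        Filter.atTop (nhds L) ∧
      (0 < L ↔ (A : ℝ) * z < 1) ∧
      (L = 0 ↔ 1 / (A : ℝ) ≤ z) := by
  have hAr : (2:ℝ) ≤ (A:ℝ) := by exact_mod_cast hA
  have hA0 : (0:ℝ) < (A:ℝ) := by linarith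
  have hFr : (1:ℝ) ≤ (F:ℝ) := by exact_mod_cast hF
  have hzn : ∀ n : ℕ, z ^ n ≤ 1 := fun n => pow_le_one₀ hz.le hz1.le
  have hznpos : ∀ n : ℕ, 0 < z ^ n := fun n => pow_pos hz n
  have hpz : ∀ n : ℕ, p * z ^ n ≤ p := fun n => by nlinarith [hzn n, hznpos n]
  have hpz0 : ∀ n : ℕ, 0 < p * z ^ n := fun n => mul_pos hp (hznpos n)
  have hcpos : ∀ n : ℕ, 0 < 1 - p * z ^ n := fun n => by nlinarith [hpz n]
  set P : ℕ → ℝ := fun N => ∏ n ∈ Finset.range N, (1 - p * z ^ n) ^ (F * A ^ (n + 1))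
    with hPdef
  have hPpos : ∀ N, 0 < P N := fun N => Finset.prod_pos fun n _ => pow_pos (hcpos n) _
  have hanti : Antitone P := by
    apply antitone_nat_of_succ_le
    intro N
    have h1 : (1 - p * z ^ N) ^ (F * A ^ (N+1)) ≤ 1 :=
      pow_le_one₀ (hcpos N).le (by nlinarith [hpz0 N])
    calc P (N+1) = P N * (1 - p * z ^ N) ^ (F * A ^ (N+1)) := Finset.prod_range_succ _ _
      _ ≤ P N := mul_le_of_le_one_right (hPpos N).le h1
  have hbdd : BddBelow (Set.range P) := ⟨0, by rintro x ⟨N, rfl⟩; exact (hPpos N).le⟩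
  have hLtend : Filter.Tendsto P Filter.atTop (nhds (⨅ N, P N)) :=
    tendsto_atTop_ciInf hanti hbdd
  set L := ⨅ N, P N with hLdef
  have hiffz : 1 / (A:ℝ) ≤ z ↔ 1 ≤ (A:ℝ) * z := by
    rw [div_le_iff₀ hA0, mul_comm]
  by_cases hAz : (A:ℝ) * z < 1
  · -- subcritical case: the limit is positive
    set C : ℝ := (F:ℝ) * (A:ℝ) * p / (1 - p) with hCdef
    have hC0 : 0 ≤ C := by
      apply div_nonneg _ (by linarith)
      positivity
    -- each factor is at least exp(-(p z^n/(1-p)))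
    have step1 : ∀ n : ℕ, Real.exp (-(p * z ^ n / (1 - p))) ≤ 1 - p * z ^ n := by
      intro n
      set x := p * z ^ n with hxdef
      have hx0 : 0 < x := hpz0 n
      have hx1 : 0 < 1 - x := hcpos n
      have hxp : x ≤ p := hpz n
      have h1 : (1 - x)⁻¹ ≤ Real.exp (x / (1 - x)) := by
        have h := Real.add_one_le_exp (x / (1 - x))
        have he : x / (1 - x) + 1 = (1 - x)⁻¹ := by field_simp; ring
        linarith [h, he ▸ h]
      have h2 : Real.exp (-(x/(1-x))) ≤ 1 - x := by
        rw [Real.exp_neg]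
        calc (Real.exp (x/(1-x)))⁻¹ ≤ ((1 - x)⁻¹)⁻¹ :=
              inv_anti₀ (by positivity) h1
          _ = 1 - x := inv_inv _
      have h3 : -(x/(1-p)) ≤ -(x/(1-x)) := by
        have : x/(1-x) ≤ x/(1-p) := by
          rw [div_le_div_iff₀ hx1 (by linarith)]
          nlinarith
        linarith
      exact le_trans (Real.exp_le_exp.mpr h3) h2
    have hgeom : ∀ N, ∑ n ∈ Finset.range N, ((A:ℝ)*z)^n ≤ 1/(1-(A:ℝ)*z) := by
      intro N
      have h := geom_sum_mul ((A:ℝ)*z) N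
      have hr0 : 0 ≤ (A:ℝ)*z := by positivity
      have hrn : 0 ≤ ((A:ℝ)*z)^N := by positivity
      rw [le_div_iff₀ (by linarith : (0:ℝ) < 1 - (A:ℝ)*z)]
      nlinarith [h]
    have hPlow : ∀ N, Real.exp (-(C / (1 - (A:ℝ)*z))) ≤ P N := by
      intro N
      have h1 : Real.exp (∑ n ∈ Finset.range N,
          ((F * A ^ (n+1) : ℕ) : ℝ) * (-(p * z ^ n / (1 - p)))) ≤ P N := by
        rw [← prod_exp_pow_aux]
        exact Finset.prod_le_prod (fun n _ => pow_nonneg (Real.exp_pos _).le _)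
          (fun n _ => pow_le_pow_left₀ (Real.exp_pos _).le (step1 n) _)
      refine le_trans (Real.exp_le_exp.mpr ?_) h1
      have hterm : ∀ n ∈ Finset.range N,
          ((F * A ^ (n+1) : ℕ) : ℝ) * (-(p * z ^ n / (1 - p)))
            = -(C * ((A:ℝ)*z)^n) := by
        intro n _
        push_cast
        rw [hCdef, mul_pow, pow_succ]
        ring
      rw [Finset.sum_congr rfl hterm, Finset.sum_neg_distrib, ← Finset.mul_sum,
        neg_le_neg_iff]
      calc C * ∑ n ∈ Finset.range N, ((A:ℝ)*z)^n
          ≤ C * (1/(1-(A:ℝ)*z)) := mul_le_mul_of_nonneg_left (hgeom N) hC0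
        _ = C / (1 - (A:ℝ)*z) := by ring
    have hLlow : Real.exp (-(C / (1 - (A:ℝ)*z))) ≤ L := le_ciInf hPlow
    have hLpos : 0 < L := lt_of_lt_of_le (Real.exp_pos _) hLlow
    exact ⟨L, hLtend, ⟨fun _ => hAz, fun _ => hLpos⟩,
      ⟨fun h => absurd h hLpos.ne', fun h => absurd (hiffz.mp h) (not_le.mpr hAz)⟩⟩
  · -- supercritical case: the limit is zero
    have hAz' : 1 ≤ (A:ℝ) * z := not_lt.mp hAz
    have hup : ∀ N, P N ≤ Real.exp (-((F:ℝ) * (A:ℝ) * p * N)) := by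
      intro N
      have h1 : P N ≤ Real.exp (∑ n ∈ Finset.range N,
          ((F * A ^ (n+1) : ℕ) : ℝ) * (-(p * z ^ n))) := by
        rw [← prod_exp_pow_aux]
        refine Finset.prod_le_prod (fun n _ => pow_nonneg (hcpos n).le _)
          (fun n _ => pow_le_pow_left₀ (hcpos n).le ?_ _)
        have := Real.add_one_le_exp (-(p * z ^ n))
        linarith
      refine le_trans h1 (Real.exp_le_exp.mpr ?_)
      have hterm : ∀ n ∈ Finset.range N,
          -((F:ℝ) * (A:ℝ) * p) ≥ ((F * A ^ (n+1) : ℕ) : ℝ) * (-(p * z ^ n)) := by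
        intro n _
        have h1 : (1:ℝ) ≤ ((A:ℝ)*z)^n := one_le_pow₀ hAz'
        have heq : ((F * A ^ (n+1) : ℕ) : ℝ) * (-(p * z ^ n))
            = -((F:ℝ) * (A:ℝ) * p * ((A:ℝ)*z)^n) := by
          push_cast
          rw [mul_pow, pow_succ]
          ring
        rw [heq]
        have hFAp : 0 < (F:ℝ) * (A:ℝ) * p := by positivity
        nlinarith
      calc ∑ n ∈ Finset.range N, ((F * A ^ (n+1) : ℕ) : ℝ) * (-(p * z ^ n))
          ≤ ∑ _n ∈ Finset.range N, -((F:ℝ) * (A:ℝ) * p) :=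
            Finset.sum_le_sum hterm
        _ = -((F:ℝ) * (A:ℝ) * p * N) := by
            rw [Finset.sum_const, Finset.card_range]; push_cast; ring
    have h0 : Filter.Tendsto (fun N : ℕ => Real.exp (-((F:ℝ) * (A:ℝ) * p * N)))
        Filter.atTop (nhds 0) := by
      apply Real.tendsto_exp_atBot.comp
      apply Filter.tendsto_neg_atTop_atBot.comp
      exact Filter.Tendsto.const_mul_atTop (by positivity)
        tendsto_natCast_atTop_atTop
    have hP0 : Filter.Tendsto P Filter.atTop (nhds 0) :=
      tendsto_of_tendsto_of_tendsto_of_le_of_le tendsto_const_nhds h0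
        (fun N => (hPpos N).le) hup
    have hL0 : L = 0 := tendsto_nhds_unique hLtend hP0
    refine ⟨L, hLtend, ?_, ?_⟩
    · rw [hL0]
      exact ⟨fun h => absurd rfl h.ne', fun h => absurd h hAz⟩
    · rw [hL0]
      exact ⟨fun _ => hiffz.mpr hAz', fun _ => rfl⟩
end

section
/- Let A ≥ 2 be an integer and let q, z be real numbers with 0 < q < 1 and 0 < z < 1. Then the sequence of partial products N ↦ ∏_{n=1}^{N} (1 − q·zⁿ)^{n·A^{n+1}} converges as N → ∞, and its limit is positive if and only if A·z < 1 (equivalently, the limit equals 0 if and only if z ≥ 1/A). [This is the probability that the completed catabolic reaction network of Model II is empty.] -/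
/-- Probability that the completed catabolic reaction network of Model II is empty:
the partial products `∏_{n=1}^{N} (1 − q·zⁿ)^{n·A^{n+1}}` converge as `N → ∞`, and the
limit is positive iff `A·z < 1`, equivalently it vanishes iff `z ≥ 1/A`. -/
theorem stmt_12 (A : ℕ) (hA : 2 ≤ A) (q z : ℝ)
    (hq : 0 < q) (hq1 : q < 1) (hz : 0 < z) (hz1 : z < 1) :
    ∃ L : ℝ,
      Filter.Tendsto
        (fun N : ℕ => ∏ n ∈ Finset.Icc 1 N, (1 - q * z ^ n) ^ (n * A ^ (n + 1)))
        Filter.atTop (nhds L) ∧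
      (0 < L ↔ (A : ℝ) * z < 1) ∧
      (L = 0 ↔ 1 / (A : ℝ) ≤ z) := by
  have hA0 : (0:ℝ) < (A:ℝ) := by
    have : (2:ℝ) ≤ (A:ℝ) := by exact_mod_cast hA
    linarith
  have hx : ∀ n : ℕ, 0 < 1 - q * z ^ n := by
    intro n
    have h1 : z ^ n ≤ 1 := pow_le_one₀ hz.le hz1.le
    nlinarith [pow_pos hz n]
  have hxle : ∀ n : ℕ, 1 - q * z ^ n ≤ 1 := by
    intro n
    nlinarith [pow_pos hz n]
  set g : ℕ → ℝ := fun n => ((n * A ^ (n+1) : ℕ) : ℝ) * Real.log (1 - q * z ^ n) with hg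
  have key : ∀ N, (∏ n ∈ Finset.Icc 1 N, (1 - q * z ^ n) ^ (n * A ^ (n + 1)))
      = Real.exp (∑ n ∈ Finset.Icc 1 N, g n) := by
    intro N
    rw [Real.exp_sum]
    refine Finset.prod_congr rfl (fun n _ => ?_)
    rw [hg]
    rw [Real.exp_nat_mul, Real.exp_log (hx n)]
  have hglog : ∀ n, Real.log (1 - q * z ^ n) ≤ 0 := fun n =>
    Real.log_nonpos (hx n).le (hxle n)
  by_cases h : (A : ℝ) * z < 1
  · -- convergent case
    have hsum : Summable g := by
      apply Summable.of_norm
      have hAz0 : 0 ≤ (A:ℝ) * z := by positivity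
      have hbase : Summable (fun n : ℕ => ((A:ℝ)*q/(1-q)) * ((n:ℝ) * ((A:ℝ)*z)^n)) := by
        apply Summable.mul_left
        have := summable_pow_mul_geometric_of_norm_lt_one (R := ℝ) 1
          (r := (A:ℝ)*z) (by rwa [Real.norm_eq_abs, abs_of_nonneg hAz0])
        simpa using this
      refine Summable.of_nonneg_of_le (fun n => norm_nonneg _) (fun n => ?_) hbase
      have hxn := hx n
      have hzn : (0:ℝ) < z ^ n := pow_pos hz n
      have hle : q * z ^ n ≤ q := by nlinarith [pow_le_one₀ hz.le hz1.le (n := n)]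
      have hlog : -Real.log (1 - q * z ^ n) ≤ q * z ^ n / (1 - q) := by
        rw [← Real.log_inv]
        have h1 := Real.log_le_sub_one_of_pos (x := (1 - q * z ^ n)⁻¹) (by positivity)
        have h2 : (1 - q * z ^ n)⁻¹ - 1 = (q * z ^ n) / (1 - q * z ^ n) := by
          field_simp
          ring
        have h3 : (q * z ^ n) / (1 - q * z ^ n) ≤ q * z ^ n / (1 - q) := by
          apply div_le_div_of_nonneg_left (by positivity) (by linarith) (by linarith)
        linarith
      have hnorm : ‖g n‖ = ((n * A ^ (n+1) : ℕ) : ℝ) * (-Real.log (1 - q * z ^ n)) := by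
        rw [hg, norm_mul, Real.norm_eq_abs, Real.norm_eq_abs,
          abs_of_nonneg (by positivity), abs_of_nonpos (hglog n)]
      rw [hnorm]
      have hb : ((n * A ^ (n+1) : ℕ) : ℝ) * (-Real.log (1 - q * z ^ n))
          ≤ ((n * A ^ (n+1) : ℕ) : ℝ) * (q * z ^ n / (1 - q)) := by
        apply mul_le_mul_of_nonneg_left hlog (by positivity)
      refine hb.trans (le_of_eq ?_)
      push_cast
      rw [mul_pow]
      ring
    have hzero : g 0 = 0 := by simp [hg]
    have heq : ∀ N, ∑ n ∈ Finset.Icc 1 N, g n = ∑ n ∈ Finset.range (N+1), g n := by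
      intro N
      apply Finset.sum_subset
      · intro x hx'
        simp only [Finset.mem_Icc] at hx'
        simp only [Finset.mem_range]
        omega
      · intro x hx' hnx
        simp only [Finset.mem_range] at hx'
        simp only [Finset.mem_Icc] at hnx
        have : x = 0 := by omega
        rw [this, hzero]
    have htend : Filter.Tendsto (fun N => ∑ n ∈ Finset.Icc 1 N, g n)
        Filter.atTop (nhds (∑' n, g n)) := by
      have h1 := hsum.hasSum.tendsto_sum_nat
      have h2 := h1.comp (Filter.tendsto_add_atTop_nat 1)
      convert h2 using 1
      funext N
      exact heq N
    refine ⟨Real.exp (∑' n, g n), ?_, ?_, ?_⟩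
    · simp only [key]
      exact (Real.continuous_exp.tendsto _).comp htend
    · exact iff_of_true (Real.exp_pos _) h
    · refine iff_of_false (Real.exp_ne_zero _) ?_
      rw [div_le_iff₀ hA0]
      intro hc
      nlinarith
  · -- divergent case : L = 0
    push_neg at h
    refine ⟨0, ?_, ?_, ?_⟩
    · have hub : ∀ N : ℕ, 1 ≤ N →
          (∏ n ∈ Finset.Icc 1 N, (1 - q * z ^ n) ^ (n * A ^ (n + 1)))
            ≤ Real.exp (-(q * A * N)) := by
        intro N hN
        rw [key]
        apply Real.exp_le_exp.mpr
        have hNmem : N ∈ Finset.Icc 1 N := Finset.mem_Icc.mpr ⟨hN, le_rfl⟩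
        have hsingle : ∑ n ∈ Finset.Icc 1 N, g n ≤ g N := by
          have := Finset.sum_le_sum_of_subset_of_nonneg
            (f := fun n => -g n)
            (Finset.singleton_subset_iff.mpr hNmem)
            (fun i _ _ => by
              simp only [hg, neg_nonneg]
              exact mul_nonpos_of_nonneg_of_nonpos (by positivity) (hglog i))
          simpa using this
        have hgN : g N ≤ -(q * A * N) := by
          have hlogN : Real.log (1 - q * z ^ N) ≤ -(q * z ^ N) := by
            have := Real.log_le_sub_one_of_pos (hx N)
            linarith
          have h1 : g N ≤ ((N * A ^ (N+1) : ℕ) : ℝ) * (-(q * z ^ N)) :=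
            mul_le_mul_of_nonneg_left hlogN (by positivity)
          have h2 : ((N * A ^ (N+1) : ℕ) : ℝ) * (-(q * z ^ N))
              = -(q * (A:ℝ) * N * ((A:ℝ)*z)^N) := by
            push_cast
            rw [mul_pow]
            ring
          have h3 : (1:ℝ) ≤ ((A:ℝ)*z)^N := one_le_pow₀ h
          have h4 : q * (A:ℝ) * N ≤ q * (A:ℝ) * N * ((A:ℝ)*z)^N :=
            le_mul_of_one_le_right (by positivity) h3
          rw [h2] at h1
          linarith
        linarith
      have hlb : ∀ N : ℕ,
          (0:ℝ) ≤ ∏ n ∈ Finset.Icc 1 N, (1 - q * z ^ n) ^ (n * A ^ (n + 1)) := by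
        intro N
        apply Finset.prod_nonneg
        intro n _
        exact pow_nonneg (hx n).le _
      have htop : Filter.Tendsto (fun N : ℕ => Real.exp (-(q * A * N)))
          Filter.atTop (nhds 0) := by
        apply Real.tendsto_exp_atBot.comp
        apply Filter.tendsto_neg_atBot_iff.mpr
        exact Filter.Tendsto.const_mul_atTop (by positivity) tendsto_natCast_atTop_atTop
      refine tendsto_of_tendsto_of_tendsto_of_le_of_le' tendsto_const_nhds htop
        (Filter.Eventually.of_forall hlb) ?_
      filter_upwards [Filter.eventually_ge_atTop 1] with N hN
      exact hub N hN
    · exact iff_of_false (lt_irrefl 0) (not_lt.mpr h)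
    · refine iff_of_true rfl ?_
      rw [div_le_iff₀ hA0]
      linarith [mul_comm (A:ℝ) z ▸ h]
end

section
/- Let A ≥ 1 be a natural number and let x be a real number with 0 < x < 1. Then 1/(1 − (1 − x)^A) ≤ 1/(A·x) + 1. -/
/-!
By Bernoulli, `1 + A x ≤ (1 + x)^A`, hence `(1 - x)^A (1 + A x) ≤ (1 - x²)^A ≤ 1`. Writing
`q = (1 - x)^A`, this says `1 - q ≥ A x / (1 + A x)`, and inverting gives the bound.
-/

theorem one_sub_pow_mul_one_add_mul_le_one {x : ℝ} (hx₀ : 0 ≤ x) (hx₁ : x ≤ 1) (n : ℕ) :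
    (1 - x) ^ n * (1 + n * x) ≤ 1 :=
  calc (1 - x) ^ n * (1 + n * x) ≤ (1 - x) ^ n * (1 + x) ^ n := by
        gcongr
        exact one_add_mul_le_pow (by linarith) n
    _ = (1 - x ^ 2) ^ n := by rw [← mul_pow]; ring
    _ ≤ 1 := pow_le_one₀ (by nlinarith) (by nlinarith)

theorem one_div_one_sub_le_one_div_add_one {q b : ℝ} (hb : 0 < b) (hq : q * (1 + b) ≤ 1) :
    1 / (1 - q) ≤ 1 / b + 1 := by
  have hq₁ : 0 < 1 - q := by nlinarith
  rw [div_add_one hb.ne', div_le_div_iff₀ hq₁ hb]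
  linarith

/-- For a natural number `A ≥ 1` and `0 < x < 1`: `1/(1 − (1−x)^A) ≤ 1/(A·x) + 1`. -/
theorem stmt_13 (A : ℕ) (hA : 1 ≤ A) (x : ℝ) (hx : 0 < x) (hx1 : x < 1) :
    1 / (1 - (1 - x) ^ A) ≤ 1 / ((A : ℝ) * x) + 1 :=
  one_div_one_sub_le_one_div_add_one (mul_pos (Nat.cast_pos.mpr hA) hx)
    (one_sub_pow_mul_one_add_mul_le_one hx.le hx1.le A)
end

section
/- Let A ≥ 1 be a natural number and let x be a real number with 0 < x < 1/2. Then 1/(1 − (1 − x)^A) ≥ 1/(A·x) − 1/A. -/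
/-! Bernoulli's inequality gives `0 < 1 - (1 - x) ^ A ≤ A * x`, hence
`1 / (A * x) ≤ 1 / (1 - (1 - x) ^ A)`, and subtracting `1 / A ≥ 0` only lowers the left side. -/

lemma one_sub_pow_lt_one {x : ℝ} (hx0 : 0 < x) (hx2 : x < 2) {n : ℕ} (hn : n ≠ 0) :
    (1 - x) ^ n < 1 :=
  calc (1 - x) ^ n ≤ |1 - x| ^ n := by rw [← abs_pow]; exact le_abs_self _
    _ < 1 := pow_lt_one₀ (abs_nonneg _) (abs_lt.2 ⟨by linarith, by linarith⟩) hn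

lemma one_sub_one_sub_pow_le_mul {x : ℝ} (hx : x ≤ 2) (n : ℕ) : 1 - (1 - x) ^ n ≤ n * x := by
  have bernoulli := one_add_mul_le_pow (a := -x) (by linarith) n
  rw [← sub_eq_add_neg] at bernoulli
  linarith

lemma one_div_mul_le_one_div_one_sub_one_sub_pow {x : ℝ} (hx0 : 0 < x) (hx2 : x < 2) {n : ℕ}
    (hn : n ≠ 0) : 1 / (n * x) ≤ 1 / (1 - (1 - x) ^ n) :=
  one_div_le_one_div_of_le (sub_pos.2 (one_sub_pow_lt_one hx0 hx2 hn))
    (one_sub_one_sub_pow_le_mul hx2.le n)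

/-- For a natural number `A ≥ 1` and `0 < x < 1/2`: `1/(1 − (1−x)^A) ≥ 1/(A·x) − 1/A`. -/
theorem stmt_14 (A : ℕ) (hA : 1 ≤ A) (x : ℝ) (hx : 0 < x) (hx1 : x < 1 / 2) :
    1 / ((A : ℝ) * x) - 1 / (A : ℝ) ≤ 1 / (1 - (1 - x) ^ A) := by
  have hrecip := one_div_mul_le_one_div_one_sub_one_sub_pow hx (by linarith) (by omega : A ≠ 0)
  have : 0 ≤ 1 / (A : ℝ) := by positivity
  linarith
end

section
/- Let A ≥ 1 be a natural number, n ≥ 1, let p₁, …, pₙ ∈ (0,1) and s₀ ∈ (0,1). Define the backward iterates u_n = s₀ and u_j = (1 − p_{j+1}·(1 − u_{j+1}))^A for 0 ≤ j < n, and set P_n := 1 and P_j := ∏_{i=j+1}^{n} (A·p_i) for 0 ≤ j < n, and η_{n−1} := P_{n−1}/(1 − u_{n−1}). Assume moreover that p_{j+1}·(1 − u_{j+1}) < 1/2 for all 0 ≤ j < n, and fix 0 ≤ j ≤ n−1 such that η_{n−1} − (1/A)·Σ_{k=j}^{n−2} P_k > 0. Then 1 − u_j ≤ P_j / (η_{n−1}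 − (1/A)·Σ_{k=j}^{n−2} P_k). -/
/-!
Write `v k = 1 - u k` and `η k = P k / v k`. Since `P k = A p_{k+1} P (k+1)`, the one-step
inequality `η k ≥ η (k+1) - P k / A` reduces, with `q = p_{k+1} v_{k+1}`, to
`(1 - q) (1 - (1 - q)^A) ≤ A q`, which is Bernoulli's inequality `1 - (1 - q)^A ≤ A q`.
Telescoping from `n - 1` down to `j` gives `η j ≥ η (n-1) - (1/A) Σ_{k=j}^{n-2} P k`, and the
right-hand side is positive by assumption, so it can be inverted.
-/

open Finset

lemma one_sub_mul_one_sub_pow_mem_Ioo {A : ℕ} (hA : A ≠ 0) {p s : ℝ}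
    (hp : p ∈ Set.Ioo (0 : ℝ) 1) (hs : s ∈ Set.Ioo (0 : ℝ) 1) :
    (1 - p * (1 - s)) ^ A ∈ Set.Ioo (0 : ℝ) 1 := by
  obtain ⟨hp0, hp1⟩ := hp
  obtain ⟨hs0, hs1⟩ := hs
  have hq0 : 0 < p * (1 - s) := mul_pos hp0 (by linarith)
  have hq1 : p * (1 - s) < 1 := by nlinarith
  exact ⟨pow_pos (by linarith) A, pow_lt_one₀ (by linarith) (by linarith) hA⟩

lemma inv_sub_le_mul_div_one_sub_pow {A : ℕ} (hA : A ≠ 0) {p v : ℝ} (hp : 0 < p) (hv : 0 < v)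
    (hpv : p * v ≤ 1) :
    1 / v - p ≤ A * p / (1 - (1 - p * v) ^ A) := by
  have hq : 0 < p * v := mul_pos hp hv
  have hD : 0 < 1 - (1 - p * v) ^ A := sub_pos.2 (pow_lt_one₀ (by linarith) (by linarith) hA)
  have bernoulli : 1 - (1 - p * v) ^ A ≤ A * (p * v) := by
    have := one_add_mul_sub_le_pow (a := 1 - p * v) (by linarith) A
    linarith [show (A : ℝ) * (1 - p * v - 1) = -(A * (p * v)) by ring]
  rw [div_sub' hv.ne', div_le_div_iff₀ hv hD]
  nlinarith

lemma div_sub_le_div_one_sub_pow {A : ℕ} (hA : A ≠ 0) {c p s : ℝ} (hc : 0 ≤ c)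
    (hp : p ∈ Set.Ioo (0 : ℝ) 1) (hs : s ∈ Set.Ioo (0 : ℝ) 1) :
    c / (1 - s) - 1 / (A : ℝ) * (A * p * c) ≤ A * p * c / (1 - (1 - p * (1 - s)) ^ A) := by
  obtain ⟨hp0, hp1⟩ := hp
  obtain ⟨hs0, hs1⟩ := hs
  have key := inv_sub_le_mul_div_one_sub_pow hA hp0 (sub_pos.2 hs1)
    (by nlinarith : p * (1 - s) ≤ 1)
  calc c / (1 - s) - 1 / (A : ℝ) * (A * p * c) = c * (1 / (1 - s) - p) := by field_simp
    _ ≤ c * (A * p / (1 - (1 - p * (1 - s)) ^ A)) := mul_le_mul_of_nonneg_left key hc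
    _ = _ := by ring

lemma sub_sum_Ico_le_of_sub_le {α : Type*} [AddCommGroup α] [PartialOrder α]
    [IsOrderedAddMonoid α] {η a : ℕ → α} {j m : ℕ} (hjm : j ≤ m)
    (h : ∀ k ∈ Ico j m, η (k + 1) - a k ≤ η k) :
    η m - ∑ k ∈ Ico j m, a k ≤ η j := by
  have hsum : ∑ k ∈ Ico j m, (η (k + 1) - η k) ≤ ∑ k ∈ Ico j m, a k :=
    sum_le_sum fun k hk => sub_le_comm.1 (h k hk)
  rw [sum_Ico_sub η hjm] at hsum
  exact sub_le_comm.1 hsum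

lemma prod_Icc_eq_mul_prod_Icc_add_one {M : Type*} [CommMonoid M] (f : ℕ → M) {a b : ℕ}
    (hab : a ≤ b) : ∏ i ∈ Icc a b, f i = f a * ∏ i ∈ Icc (a + 1) b, f i := by
  rw [Icc_add_one_left_eq_Ioc, mul_prod_Ioc_eq_prod_Icc hab]

theorem stmt_16_general (A n : ℕ) (hA : 1 ≤ A) (p u : ℕ → ℝ)
    (hp : ∀ k, 1 ≤ k → k ≤ n → p k ∈ Set.Ioo (0 : ℝ) 1)
    (hun : u n ∈ Set.Ioo (0 : ℝ) 1)
    (hu : ∀ j, j < n → u j = (1 - p (j + 1) * (1 - u (j + 1))) ^ A)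
    (j : ℕ) (hj : j < n)
    (hpos : 0 <
      (∏ i ∈ Finset.Icc n n, ((A : ℝ) * p i)) / (1 - u (n - 1)) -
        (1 / (A : ℝ)) *
          ∑ k ∈ Finset.Ico j (n - 1), ∏ i ∈ Finset.Icc (k + 1) n, ((A : ℝ) * p i)) :
    1 - u j ≤
      (∏ i ∈ Finset.Icc (j + 1) n, ((A : ℝ) * p i)) /
        ((∏ i ∈ Finset.Icc n n, ((A : ℝ) * p i)) / (1 - u (n - 1)) -
          (1 / (A : ℝ)) *
            ∑ k ∈ Finset.Ico j (n - 1), ∏ i ∈ Finset.Icc (k + 1) n, ((A : ℝ) * p i)) := by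
  have hA0 : A ≠ 0 := by omega
  set P : ℕ → ℝ := fun k => ∏ i ∈ Icc (k + 1) n, ((A : ℝ) * p i)
  have hP_pos (k : ℕ) : 0 < P k :=
    prod_pos fun i hi => mul_pos (by positivity) (hp i (by grind) (mem_Icc.1 hi).2).1
  have hP_succ (k : ℕ) (hk : k < n) : P k = A * p (k + 1) * P (k + 1) :=
    prod_Icc_eq_mul_prod_Icc_add_one _ hk
  have hu_mem (k : ℕ) (hk : k ≤ n) : u k ∈ Set.Ioo (0 : ℝ) 1 := by
    refine Nat.decreasingInduction (motive := fun k _ => u k ∈ Set.Ioo (0 : ℝ) 1)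
      (fun k hk ih => ?_) hun hk
    rw [hu k hk]
    exact one_sub_mul_one_sub_pow_mem_Ioo hA0 (hp (k + 1) (by omega) hk) ih
  have hstep : ∀ k ∈ Ico j (n - 1),
      P (k + 1) / (1 - u (k + 1)) - 1 / (A : ℝ) * P k ≤ P k / (1 - u k) := by
    intro k hk
    have hk : k < n := by grind
    rw [hu k hk, hP_succ k hk]
    exact div_sub_le_div_one_sub_pow hA0 (hP_pos (k + 1)).le (hp (k + 1) (by omega) hk)
      (hu_mem (k + 1) hk)
  have htel := sub_sum_Ico_le_of_sub_le (η := fun k => P k / (1 - u k))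
    (a := fun k => 1 / (A : ℝ) * P k) (j := j) (m := n - 1) (by omega) hstep
  have hPn : ∏ i ∈ Icc n n, ((A : ℝ) * p i) = P (n - 1) := by
    simp only [P, Nat.sub_add_cancel (by omega : 1 ≤ n)]
  rw [hPn, mul_sum] at hpos ⊢
  have hvj : 0 < 1 - u j := sub_pos.2 (hu_mem j hj.le).2
  exact (le_div_comm₀ hvj hpos).2 htel

/-- Backward iterates of binomial generating functions, upper bound: with `u n = s₀ ∈ (0,1)`,
`u j = (1 − p_{j+1}(1 − u_{j+1}))^A`, `P j = ∏_{i=j+1}^n (A·p_i)` and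
`η = P_{n−1}/(1 − u_{n−1})`, if moreover `p_{j+1}(1 − u_{j+1}) < 1/2` for all `j < n` and
`η − (1/A)·Σ_{k=j}^{n−2} P k > 0`, then `1 − u j ≤ P j / (η − (1/A)·Σ_{k=j}^{n−2} P k)`. -/
theorem stmt_16 (A n : ℕ) (hA : 1 ≤ A) (hn : 1 ≤ n) (p u : ℕ → ℝ)
    (hp : ∀ k, 1 ≤ k → k ≤ n → p k ∈ Set.Ioo (0 : ℝ) 1)
    (hun : u n ∈ Set.Ioo (0 : ℝ) 1)
    (hu : ∀ j, j < n → u j = (1 - p (j + 1) * (1 - u (j + 1))) ^ A)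
    (hhalf : ∀ j, j < n → p (j + 1) * (1 - u (j + 1)) < 1 / 2)
    (j : ℕ) (hj : j < n)
    (hpos : 0 <
      (∏ i ∈ Finset.Icc n n, ((A : ℝ) * p i)) / (1 - u (n - 1)) -
        (1 / (A : ℝ)) *
          ∑ k ∈ Finset.Ico j (n - 1), ∏ i ∈ Finset.Icc (k + 1) n, ((A : ℝ) * p i)) :
    1 - u j ≤
      (∏ i ∈ Finset.Icc (j + 1) n, ((A : ℝ) * p i)) /
        ((∏ i ∈ Finset.Icc n n, ((A : ℝ) * p i)) / (1 - u (n - 1)) -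
          (1 / (A : ℝ)) *
            ∑ k ∈ Finset.Ico j (n - 1), ∏ i ∈ Finset.Icc (k + 1) n, ((A : ℝ) * p i)) :=
  stmt_16_general A n hA p u hp hun hu j hj hpos
end

section
/- Let 𝒜 be a type (the alphabet) and ω a predicate on words over 𝒜; let Prim denote the set of primitive words for ω, and let T denote the set of words w such that no infix of w belongs to Prim (the composition tree). Then for every word w and every letter b: (a) w ++ [b] ∈ T ∪ Prim if and only if w ∈ T and no proper suffix of w ++ [b] belongs to Prim; and (b) if w ∈ T and no proper suffix of w ++ [b] belongs to Prim, then w ++ [b] ∈ Prim if and only if ω (w ++ [b]) holds (and w ++ [b] ∈ T otherwise). [Inductive construction of the composition tree and its primitive vertices.] -/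
/-!
A shortest infix satisfying `ω` is primitive, so a word has a primitive infix as soon as one of
its infixes satisfies `ω`. Hence `v` is in the tree or primitive exactly when no proper infix
of `v` is primitive, and then `v` is primitive iff `ω v`. For `v = w ++ [b]` the proper infixes
are the infixes of `w` together with the proper suffixes of `v`.
-/

/-- A word `v` is primitive for the predicate `ω` if `ω v` holds but `ω` fails on every
proper infix of `v`. -/
def IsPrimitiveWord {α : Type*} (ω : List α → Prop) (v : List α) : Prop :=
  ω v ∧ ∀ v' : List α, v' <:+: v → v' ≠ v → ¬ ω v'

/-- The composition tree: words containing no primitive infix. -/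
def InCompositionTree {α : Type*} (ω : List α → Prop) (w : List α) : Prop :=
  ∀ u : List α, u <:+: w → ¬ IsPrimitiveWord ω u

section

variable {α : Type*} {ω : List α → Prop} {v : List α}

theorem exists_infix_isPrimitiveWord (hv : ω v) : ∃ p, p <:+: v ∧ IsPrimitiveWord ω p := by
  obtain ⟨p, ⟨hpv, hp⟩, hmin⟩ :=
    (measure List.length).wf.has_min {p | p <:+: v ∧ ω p} ⟨v, List.infix_refl v, hv⟩
  refine ⟨p, hpv, hp, fun u hup hne hu => hmin u ⟨hup.trans hpv, hu⟩ ?_⟩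
  exact lt_of_le_of_ne hup.length_le (mt hup.eq_of_length hne)

theorem isPrimitiveWord_iff_of_forall_proper_infix
    (h : ∀ u, u <:+: v → u ≠ v → ¬ IsPrimitiveWord ω u) : IsPrimitiveWord ω v ↔ ω v := by
  refine ⟨And.left, fun hv => ⟨hv, fun u huv hne hu => ?_⟩⟩
  obtain ⟨p, hpu, hp⟩ := exists_infix_isPrimitiveWord hu
  have hpv : p <:+: v := hpu.trans huv
  have hpne : p ≠ v := fun hpv' => hne (huv.eq_of_length_le (hpv' ▸ hpu.length_le))
  exact h p hpv hpne hp

theorem inCompositionTree_iff :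
    InCompositionTree ω v ↔
      (∀ u, u <:+: v → u ≠ v → ¬ IsPrimitiveWord ω u) ∧ ¬ IsPrimitiveWord ω v := by
  refine ⟨fun h => ⟨fun u hu _ => h u hu, h v (List.infix_refl v)⟩, ?_⟩
  rintro ⟨h, hv⟩ u hu
  by_cases huv : u = v
  · exact huv ▸ hv
  · exact h u hu huv

theorem inCompositionTree_or_isPrimitiveWord_iff :
    InCompositionTree ω v ∨ IsPrimitiveWord ω v ↔
      ∀ u, u <:+: v → u ≠ v → ¬ IsPrimitiveWord ω u := by
  refine ⟨?_, fun h => ?_⟩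
  · rintro (hv | hv) u hu hne
    · exact hv u hu
    · exact fun hup => hv.2 u hu hne hup.1
  · by_cases hv : IsPrimitiveWord ω v
    · exact Or.inr hv
    · exact Or.inl (inCompositionTree_iff.2 ⟨h, hv⟩)

end

theorem List.forall_proper_infix_concat_iff {α : Type*} {P : List α → Prop} {w : List α} {b : α} :
    (∀ u, u <:+: w ++ [b] → u ≠ w ++ [b] → P u) ↔
      (∀ u, u <:+: w → P u) ∧ ∀ s, s <:+ w ++ [b] → s ≠ w ++ [b] → P s := by
  refine ⟨fun h => ⟨fun u hu => h u (hu.trans infix_append_left) ?_,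
    fun s hs => h s hs.isInfix⟩, ?_⟩
  · rintro rfl
    simpa using hu.length_le
  · rintro ⟨hw, hs⟩ u hu hne
    rcases List.infix_concat_iff.1 hu with hu | hu
    · exact hs u hu hne
    · exact hw u hu

/-- Inductive construction of the composition tree and its primitive vertices:
(a) `w ++ [b]` is in the tree or primitive iff `w` is in the tree and no proper suffix of
`w ++ [b]` is primitive; (b) in that case, `w ++ [b]` is primitive iff `ω (w ++ [b])`, and
it is in the tree otherwise. -/
theorem stmt_18 {α : Type*} (ω : List α → Prop) (w : List α) (b : α) :
    ((InCompositionTree ω (w ++ [b]) ∨ IsPrimitiveWord ω (w ++ [b])) ↔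
      (InCompositionTree ω w ∧
        ∀ s : List α, s <:+ w ++ [b] → s ≠ w ++ [b] → ¬ IsPrimitiveWord ω s)) ∧
    (InCompositionTree ω w →
      (∀ s : List α, s <:+ w ++ [b] → s ≠ w ++ [b] → ¬ IsPrimitiveWord ω s) →
      ((IsPrimitiveWord ω (w ++ [b]) ↔ ω (w ++ [b])) ∧
        (¬ ω (w ++ [b]) → InCompositionTree ω (w ++ [b])))) := by
  refine ⟨inCompositionTree_or_isPrimitiveWord_iff.trans List.forall_proper_infix_concat_iff,
    fun hw hs => ?_⟩
  have hinfix := List.forall_proper_infix_concat_iff.2 ⟨hw, hs⟩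
  have hprim := isPrimitiveWord_iff_of_forall_proper_infix hinfix
  exact ⟨hprim, fun hω => inCompositionTree_iff.2 ⟨hinfix, mt hprim.1 hω⟩⟩
end
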